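/- arXiv:1508.05538 — 6 statements merged into one kernel-verified Lean document; each statement's English description precedes it below -/
import Mathlib

section
/- Let p, q : [0,1] → ℝ≥0 be probability density functions and let Φ be the cumulative distribution function of the mixture (p+q)/2. Then for random variables X ~ p and Y ~ q, the distributions of Φ(X) and Φ(Y) are supported on [0,1] and the sum of their density functions is identically 2; in particular, for any 0 ≤ a ≤ b ≤ 1, Pr[Φ(X) ∈ [a,b]] + Pr[Φ(Y) ∈ [a,b]] = 2(b - a). -/
open MeasureTheory Set

/-- If Φ is the CDF of the mixture (p+q)/2 of two densities on [0,1],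
then for X ~ p, Y ~ q and any 0 ≤ a ≤ b ≤ 1,
Pr[Φ(X) ∈ [a,b]] + Pr[Φ(Y) ∈ [a,b]] = 2(b-a). -/
theorem stmt0 (p q : ℝ → ℝ)
    (hp0 : ∀ x, 0 ≤ p x) (hq0 : ∀ x, 0 ≤ q x)
    (hpm : Measurable p) (hqm : Measurable q)
    (hpi : IntegrableOn p (Icc 0 1)) (hqi : IntegrableOn q (Icc 0 1))
    (hp1 : ∫ x in Icc (0:ℝ) 1, p x = 1) (hq1 : ∫ x in Icc (0:ℝ) 1, q x = 1)
    (Φ : ℝ → ℝ) (hΦ : ∀ t, Φ t = ∫ x in Icc (0:ℝ) t, (p x + q x) / 2)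
    (a b : ℝ) (ha : 0 ≤ a) (hab : a ≤ b) (hb : b ≤ 1) :
    (∫ x in {x ∈ Icc (0:ℝ) 1 | Φ x ∈ Icc a b}, p x)
      + (∫ x in {x ∈ Icc (0:ℝ) 1 | Φ x ∈ Icc a b}, q x) = 2 * (b - a) := by
  set m : ℝ → ℝ := fun x => (p x + q x) / 2 with hm
  have hm0 : ∀ x, 0 ≤ m x := fun x => by
    exact div_nonneg (add_nonneg (hp0 x) (hq0 x)) (by norm_num)
  have hmi : IntegrableOn m (Icc 0 1) := (hpi.add hqi).div_const 2
  have hΦ' : ∀ t, Φ t = ∫ x in Ioc (0:ℝ) t, m x := fun t => by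
    rw [hΦ t, ← integral_Icc_eq_integral_Ioc]
  have key : ∀ s t : ℝ, 0 ≤ s → s ≤ t → t ≤ 1 →
      Φ t - Φ s = ∫ x in Ioc s t, m x := by
    intro s t hs hst ht1
    have h1 : IntegrableOn m (Ioc 0 s) :=
      hmi.mono_set ((Ioc_subset_Icc_self).trans (Icc_subset_Icc le_rfl (hst.trans ht1)))
    have h2 : IntegrableOn m (Ioc s t) :=
      hmi.mono_set ((Ioc_subset_Icc_self).trans (Icc_subset_Icc hs ht1))
    have hu : Ioc (0:ℝ) s ∪ Ioc s t = Ioc 0 t := Ioc_union_Ioc_eq_Ioc hs hst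
    have hdisj : Disjoint (Ioc (0:ℝ) s) (Ioc s t) := Ioc_disjoint_Ioc_of_le le_rfl
    rw [hΦ' t, hΦ' s, ← hu,
      setIntegral_union hdisj measurableSet_Ioc h1 h2]
    ring
  have hmono : ∀ s t : ℝ, 0 ≤ s → s ≤ t → t ≤ 1 → Φ s ≤ Φ t := by
    intro s t hs hst ht1
    have := key s t hs hst ht1
    have hnn : 0 ≤ ∫ x in Ioc s t, m x :=
      setIntegral_nonneg measurableSet_Ioc (fun x _ => hm0 x)
    linarith
  have hΦ0 : Φ 0 = 0 := by rw [hΦ' 0]; simp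
  have hΦ1 : Φ 1 = 1 := by
    rw [hΦ 1]
    have : ∫ x in Icc (0:ℝ) 1, (p x + q x) / 2
        = (∫ x in Icc (0:ℝ) 1, (p x + q x)) / 2 := integral_div 2 _
    rw [this, integral_add hpi hqi, hp1, hq1]; norm_num
  have hΦcont : ContinuousOn Φ (Icc 0 1) := by
    have h := intervalIntegral.continuousOn_primitive (f := m) (μ := volume)
      (a := 0) (b := 1) hmi
    have : Φ = fun x => ∫ t in Ioc 0 x, m t := funext fun t => hΦ' t
    rw [this]; exact h
  obtain ⟨c, hc01, hΦc⟩ : ∃ c ∈ Icc (0:ℝ) 1, Φ c = a := by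
    have := intermediate_value_Icc (le_of_lt one_pos : (0:ℝ) ≤ 1) hΦcont
    rw [hΦ0, hΦ1] at this
    exact this ⟨ha, hab.trans hb⟩
  obtain ⟨d, hd, hΦd⟩ : ∃ d ∈ Icc c 1, Φ d = b := by
    have hsub : Icc c 1 ⊆ Icc (0:ℝ) 1 := Icc_subset_Icc hc01.1 le_rfl
    have := intermediate_value_Icc hc01.2 (hΦcont.mono hsub)
    rw [hΦc, hΦ1] at this
    exact this ⟨hab, hb⟩
  set S : Set ℝ := {x ∈ Icc (0:ℝ) 1 | Φ x ∈ Icc a b} with hS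
  have hScl : IsClosed S := by
    have : S = Icc (0:ℝ) 1 ∩ Φ ⁻¹' (Icc a b) := rfl
    rw [this]
    exact ContinuousOn.preimage_isClosed_of_isClosed hΦcont isClosed_Icc isClosed_Icc
  have hSsub : S ⊆ Icc (0:ℝ) 1 := fun x hx => hx.1
  have hScomp : IsCompact S := isCompact_Icc.of_isClosed_subset hScl hSsub
  have hcS : c ∈ S := ⟨hc01, by rw [hΦc]; exact ⟨le_rfl, hab⟩⟩
  have hdS : d ∈ S := ⟨⟨hc01.1.trans hd.1, hd.2⟩, by rw [hΦd]; exact ⟨hab, le_rfl⟩⟩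
  have hSne : S.Nonempty := ⟨c, hcS⟩
  obtain ⟨e, heS, hemin⟩ := hScomp.exists_isMinOn hSne (continuousOn_id)
  obtain ⟨f, hfS, hfmax⟩ := hScomp.exists_isMaxOn hSne (continuousOn_id)
  have hef : ∀ x ∈ S, e ≤ x ∧ x ≤ f := fun x hx => ⟨hemin hx, hfmax hx⟩
  have he0 : 0 ≤ e := heS.1.1
  have hf1 : f ≤ 1 := hfS.1.2
  have hec : e ≤ c := (hef c hcS).1
  have hdf : d ≤ f := (hef d hdS).2
  have hcd : c ≤ d := hd.1
  have hΦe : Φ e = a := le_antisymm ((hmono e c he0 hec hc01.2).trans_eq hΦc) heS.2.1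
  have hΦf : Φ f = b := le_antisymm hfS.2.2 (hΦd ▸ hmono d f (hc01.1.trans hcd) hdf hf1)
  have heq1 : ∫ x in Icc e f, m x = b - a := by
    rw [integral_Icc_eq_integral_Ioc,
      ← key e f he0 (hec.trans (hcd.trans hdf)) hf1, hΦe, hΦf]
  have heq2 : ∫ x in Icc c d, m x = b - a := by
    rw [integral_Icc_eq_integral_Ioc, ← key c d hc01.1 hcd hd.2, hΦc, hΦd]
  have hSmeas : MeasurableSet S := hScl.measurableSet
  have hmiS : IntegrableOn m S := hmi.mono_set hSsub
  have hmief : IntegrableOn m (Icc e f) :=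
    hmi.mono_set (Icc_subset_Icc he0 hf1)
  have hSef : S ⊆ Icc e f := fun x hx => ⟨(hef x hx).1, (hef x hx).2⟩
  have hcdS : Icc c d ⊆ S := by
    intro x hx
    have hx01 : x ∈ Icc (0:ℝ) 1 := ⟨hc01.1.trans hx.1, hx.2.trans hd.2⟩
    refine ⟨hx01, ?_, ?_⟩
    · rw [← hΦc]; exact hmono c x hc01.1 hx.1 hx01.2
    · rw [← hΦd]; exact hmono x d hx01.1 hx.2 hd.2
  have hSm : ∫ x in S, m x = b - a := by
    have hle1 : ∫ x in S, m x ≤ ∫ x in Icc e f, m x :=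
      setIntegral_mono_set hmief (Filter.Eventually.of_forall fun x => hm0 x)
        (HasSubset.Subset.eventuallyLE hSef)
    have hle2 : ∫ x in Icc c d, m x ≤ ∫ x in S, m x :=
      setIntegral_mono_set hmiS (Filter.Eventually.of_forall fun x => hm0 x)
        (HasSubset.Subset.eventuallyLE hcdS)
    rw [heq1] at hle1; rw [heq2] at hle2
    linarith
  have hpiS : IntegrableOn p S := hpi.mono_set hSsub
  have hqiS : IntegrableOn q S := hqi.mono_set hSsub
  have : ∫ x in S, m x = ((∫ x in S, p x) + ∫ x in S, q x) / 2 := by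
    simp only [hm]
    rw [integral_div, integral_add hpiS hqiS]
  rw [this] at hSm
  linarith
end

section
/- Let f : [0,1] → [-1,1] be differentiable with f'(t) = m(p(t) - q(t)) - m(p(t)+q(t))f(t) for continuous densities p, q on [0,1] and m > 0. Let δ > 0 and let I = [X,Y] ⊆ [0,1] be an interval with |∫_I (p - q)| = δ and ∫_I (p + q) < 1/m. Then there exists x ∈ I such that |f(x)| ≥ mδ/3. -/
open MeasureTheory Set intervalIntegral

/-- Lemma 3.6: if |p(I)-q(I)| = δ and p(I)+q(I) < 1/m for I = [X,Y],
then |f(x)| ≥ mδ/3 somewhere on I. -/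
theorem stmt1 (p q f : ℝ → ℝ) (m δ : ℝ) (hm : 0 < m) (hδ : 0 < δ)
    (hpc : ContinuousOn p (Icc 0 1)) (hqc : ContinuousOn q (Icc 0 1))
    (hp0 : ∀ x, 0 ≤ p x) (hq0 : ∀ x, 0 ≤ q x)
    (hfrange : ∀ t ∈ Icc (0:ℝ) 1, f t ∈ Icc (-1:ℝ) 1)
    (hf' : ∀ t ∈ Icc (0:ℝ) 1, HasDerivAt f (m * (p t - q t) - m * (p t + q t) * f t) t)
    (X Y : ℝ) (hXY : X ≤ Y) (hX : 0 ≤ X) (hY : Y ≤ 1)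
    (hdisc : |∫ t in X..Y, (p t - q t)| = δ)
    (hmass : (∫ t in X..Y, (p t + q t)) < 1 / m) :
    ∃ x ∈ Icc X Y, m * δ / 3 ≤ |f x| := by
  by_contra hcon
  push_neg at hcon
  have hsub : Icc X Y ⊆ Icc (0:ℝ) 1 := Icc_subset_Icc hX hY
  have huIcc : uIcc X Y = Icc X Y := uIcc_of_le hXY
  have hfc : ContinuousOn f (Icc 0 1) := fun t ht =>
    (hf' t ht).continuousAt.continuousWithinAt
  have hpcI : ContinuousOn p (Icc X Y) := hpc.mono hsub
  have hqcI : ContinuousOn q (Icc X Y) := hqc.mono hsub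
  have hfcI : ContinuousOn f (Icc X Y) := hfc.mono hsub
  have hipq : IntervalIntegrable (fun t => p t - q t) volume X Y := by
    apply ContinuousOn.intervalIntegrable
    rw [huIcc]; exact hpcI.sub hqcI
  have hipq' : IntervalIntegrable (fun t => p t + q t) volume X Y := by
    apply ContinuousOn.intervalIntegrable
    rw [huIcc]; exact hpcI.add hqcI
  have hipqf : IntervalIntegrable (fun t => (p t + q t) * f t) volume X Y := by
    apply ContinuousOn.intervalIntegrable
    rw [huIcc]; exact (hpcI.add hqcI).mul hfcI
  have hig : IntervalIntegrable
      (fun t => m * (p t - q t) - m * (p t + q t) * f t) volume X Y := by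
    apply ContinuousOn.intervalIntegrable
    rw [huIcc]
    exact (continuousOn_const.mul (hpcI.sub hqcI)).sub
      ((continuousOn_const.mul (hpcI.add hqcI)).mul hfcI)
  have hftc : (∫ t in X..Y, (m * (p t - q t) - m * (p t + q t) * f t))
      = f Y - f X := by
    apply intervalIntegral.integral_eq_sub_of_hasDerivAt _ hig
    intro t ht
    exact hf' t (hsub (huIcc ▸ ht))
  have hsplit : (∫ t in X..Y, (m * (p t - q t) - m * (p t + q t) * f t))
      = m * (∫ t in X..Y, (p t - q t)) - m * (∫ t in X..Y, (p t + q t) * f t) := by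
    have he : ∀ t, m * (p t - q t) - m * (p t + q t) * f t
        = m * (p t - q t) - m * ((p t + q t) * f t) := fun t => by ring
    simp_rw [he]
    rw [intervalIntegral.integral_sub (hipq.const_mul m) (hipqf.const_mul m),
      intervalIntegral.integral_const_mul, intervalIntegral.integral_const_mul]
  -- bound on the f-weighted integral
  have hB0 : 0 ≤ ∫ t in X..Y, (p t + q t) := by
    apply intervalIntegral.integral_nonneg hXY
    intro t _; exact add_nonneg (hp0 t) (hq0 t)
  have hCbound : |∫ t in X..Y, (p t + q t) * f t|
      ≤ (m * δ / 3) * ∫ t in X..Y, (p t + q t) := by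
    calc |∫ t in X..Y, (p t + q t) * f t|
        ≤ ∫ t in X..Y, |(p t + q t) * f t| :=
          intervalIntegral.abs_integral_le_integral_abs hXY
      _ ≤ ∫ t in X..Y, (p t + q t) * (m * δ / 3) := by
          apply intervalIntegral.integral_mono_on hXY hipqf.abs
            (hipq'.mul_const _)
          intro t ht
          rw [abs_mul, abs_of_nonneg (add_nonneg (hp0 t) (hq0 t))]
          exact mul_le_mul_of_nonneg_left (le_of_lt (hcon t ht))
            (add_nonneg (hp0 t) (hq0 t))
      _ = (m * δ / 3) * ∫ t in X..Y, (p t + q t) := by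
          rw [intervalIntegral.integral_mul_const, mul_comm]
  have hmd3 : 0 < m * δ / 3 := by positivity
  have hXmem : X ∈ Icc X Y := ⟨le_refl X, hXY⟩
  have hYmem : Y ∈ Icc X Y := ⟨hXY, le_refl Y⟩
  have hfX := hcon X hXmem
  have hfY := hcon Y hYmem
  have key : m * δ ≤ |f Y - f X| + m * |∫ t in X..Y, (p t + q t) * f t| := by
    have : m * (∫ t in X..Y, (p t - q t))
        = (f Y - f X) + m * (∫ t in X..Y, (p t + q t) * f t) := by
      rw [← hftc, hsplit]; ring
    calc m * δ = |m * (∫ t in X..Y, (p t - q t))| := by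
          rw [abs_mul, abs_of_pos hm, hdisc]
      _ = |(f Y - f X) + m * (∫ t in X..Y, (p t + q t) * f t)| := by rw [this]
      _ ≤ |f Y - f X| + |m * (∫ t in X..Y, (p t + q t) * f t)| := abs_add_le _ _
      _ = |f Y - f X| + m * |∫ t in X..Y, (p t + q t) * f t| := by
          rw [abs_mul, abs_of_pos hm]
  have h1 : |f Y - f X| < 2 * (m * δ / 3) := by
    calc |f Y - f X| ≤ |f Y| + |f X| := abs_sub _ _
      _ < 2 * (m * δ / 3) := by linarith
  have h2 : m * |∫ t in X..Y, (p t + q t) * f t| < m * δ / 3 := by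
    calc m * |∫ t in X..Y, (p t + q t) * f t|
        ≤ m * ((m * δ / 3) * ∫ t in X..Y, (p t + q t)) :=
          mul_le_mul_of_nonneg_left hCbound hm.le
      _ < m * ((m * δ / 3) * (1 / m)) := by
          apply mul_lt_mul_of_pos_left _ hm
          exact mul_lt_mul_of_pos_left hmass hmd3
      _ = m * δ / 3 := by field_simp
  linarith
end

section
/- Let a ≥ 1, b ≥ 1, c ≥ a be integers. There exists N ∈ ℤ+ such that for every function f : {a-element subsets of [N]} → [b], there exists a subset S ⊆ [N] with |S| = c such that f is constant on all a-element subsets of S. -/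
open Filter

/-- Infinite hypergraph Ramsey theorem on ℕ. -/
lemma ramsey_inf : ∀ (a : ℕ) {b : ℕ} (f : Finset ℕ → Fin (b + 1)) (S : Set ℕ), S.Infinite →
    ∃ T, T ⊆ S ∧ T.Infinite ∧ ∃ col : Fin (b + 1),
      ∀ u : Finset ℕ, ↑u ⊆ T → u.card = a → f u = col := by
  intro a
  induction a with
  | zero =>
    intro b f S hS
    exact ⟨S, subset_rfl, hS, f ∅, fun u _ hc => by rw [Finset.card_eq_zero.mp hc]⟩
  | succ a ih =>
    intro b f S hS
    have key : ∀ s : {S' : Set ℕ // S'.Infinite}, ∃ t : {S' : Set ℕ // S'.Infinite},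
        t.1 ⊆ s.1 \ {sInf s.1} ∧ ∃ col : Fin (b + 1), ∀ u : Finset ℕ, ↑u ⊆ t.1 → u.card = a →
          f (insert (sInf s.1) u) = col := by
      intro s
      obtain ⟨T, hTsub, hTinf, col, hcol⟩ := ih (fun u => f (insert (sInf s.1) u))
        (s.1 \ {sInf s.1}) (s.2.diff (Set.finite_singleton _))
      exact ⟨⟨T, hTinf⟩, hTsub, col, hcol⟩
    choose next hsub col hcol using key
    set seq : ℕ → {S' : Set ℕ // S'.Infinite} := fun n => next^[n] ⟨S, hS⟩ with hseq
    have hstep : ∀ n, seq (n + 1) = next (seq n) := by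
      intro n; simp [hseq, Function.iterate_succ_apply']
    set x : ℕ → ℕ := fun n => sInf (seq n).1 with hxdef
    have hxmem : ∀ n, x n ∈ (seq n).1 := fun n => Nat.sInf_mem (seq n).2.nonempty
    have hsub' : ∀ n, (seq (n + 1)).1 ⊆ (seq n).1 \ {x n} := by
      intro n; rw [hstep n]; exact hsub (seq n)
    have hmono : ∀ n m, n ≤ m → (seq m).1 ⊆ (seq n).1 := by
      intro n m hnm
      induction m, hnm using Nat.le_induction with
      | base => exact subset_rfl
      | succ m hnm ihm => exact fun y hy => ihm ((hsub' m hy).1)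
    have hxlt : StrictMono x := by
      apply strictMono_nat_of_lt_succ
      intro n
      have h1 := hsub' n (hxmem (n + 1))
      exact lt_of_le_of_ne (Nat.sInf_le h1.1) (fun h => h1.2 h.symm)
    have hseqS : ∀ n, (seq n).1 ⊆ S := by
      intro n
      have := hmono 0 n (Nat.zero_le n)
      simpa [hseq] using this
    obtain ⟨v, hv⟩ := Finite.exists_infinite_fiber (fun n => col (seq n))
    have hI : ((fun n => col (seq n)) ⁻¹' {v}).Infinite := Set.infinite_coe_iff.mp hv
    refine ⟨x '' ((fun n => col (seq n)) ⁻¹' {v}), ?_, hI.image hxlt.injective.injOn, v, ?_⟩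
    · rintro _ ⟨i, _, rfl⟩
      exact hseqS i (hxmem i)
    · intro u hu hcard
      have hne : u.Nonempty := Finset.card_pos.mp (by omega)
      set m := u.min' hne with hm
      have hmmem : m ∈ u := u.min'_mem hne
      obtain ⟨i, hiI, hxi⟩ := hu hmmem
      have herase : ↑(u.erase m) ⊆ (seq (i + 1)).1 := by
        intro y hy
        have hy' : y ∈ u.erase m := hy
        obtain ⟨j, hjI, rfl⟩ := hu (Finset.erase_subset _ _ hy')
        have hlt : m < x j :=
          lt_of_le_of_ne (u.min'_le _ (Finset.erase_subset _ _ hy'))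
            (Ne.symm (Finset.ne_of_mem_erase hy'))
        rw [← hxi] at hlt
        have hij : i < j := hxlt.lt_iff_lt.mp hlt
        exact hmono (i + 1) j hij (hxmem j)
      have hins : insert m (u.erase m) = u := Finset.insert_erase hmmem
      have hcarderase : (u.erase m).card = a := by
        rw [Finset.card_erase_of_mem hmmem, hcard]; omega
      have h1 : f (insert (sInf (seq i).1) (u.erase m)) = col (seq i) := by
        apply hcol (seq i) (u.erase m) _ hcarderase
        rw [← hstep i]; exact herase
      have hcolv : col (seq i) = v := hiI
      have heq : sInf (seq i).1 = m := hxi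
      rw [heq] at h1
      rw [← hins, h1, hcolv]

/-- hypergraph Ramsey theorem: for all a, b, c there is N such that any
b-coloring of the a-element subsets of [N] admits a monochromatic subset of size c. -/
theorem stmt12 (a b c : ℕ) (ha : 1 ≤ a) (hb : 1 ≤ b) (hc : a ≤ c) :
    ∃ N : ℕ, 0 < N ∧ ∀ f : Finset ℕ → Fin b,
      ∃ S : Finset ℕ, S ⊆ Finset.range N ∧ S.card = c ∧
        ∃ col : Fin b, ∀ T ⊆ S, T.card = a → f T = col := by
  obtain ⟨b', rfl⟩ : ∃ b', b = b' + 1 := ⟨b - 1, by omega⟩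
  by_contra hcon
  push_neg at hcon
  have hcon' : ∀ N : ℕ, ∃ f : Finset ℕ → Fin (b' + 1), ∀ S : Finset ℕ,
      S ⊆ Finset.range (N + 1) → S.card = c → ∀ col : Fin (b' + 1),
        ∃ T, T ⊆ S ∧ T.card = a ∧ f T ≠ col := fun N => hcon (N + 1) (Nat.succ_pos N)
  choose F hF using hcon'
  set U : Ultrafilter ℕ := Filter.hyperfilter ℕ with hU
  have hex : ∀ T : Finset ℕ, ∃ colv : Fin (b' + 1), {N | F N T = colv} ∈ U := by
    intro T
    by_contra hc2
    push_neg at hc2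
    have hmem : ∀ colv : Fin (b' + 1), {N | F N T = colv}ᶜ ∈ U := by
      intro colv
      exact Ultrafilter.compl_mem_iff_notMem.mpr (hc2 colv)
    have : (⋂ colv : Fin (b' + 1), {N | F N T = colv}ᶜ) ∈ U :=
      Filter.iInter_mem.mpr hmem
    obtain ⟨N, hN⟩ := Filter.nonempty_of_mem this
    simp only [Set.mem_iInter, Set.mem_compl_iff, Set.mem_setOf_eq] at hN
    exact hN (F N T) rfl
  choose f hf using hex
  obtain ⟨X, _, hXinf, v, hv⟩ := ramsey_inf a f Set.univ Set.infinite_univ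
  obtain ⟨S₀, hS₀X, hS₀card⟩ := hXinf.exists_subset_card_eq c
  -- the good set of N's
  have hbig : ((⋂ T ∈ S₀.powersetCard a, {N | F N T = v}) ∩
      {N | ∀ m ∈ S₀, m < N + 1}) ∈ U := by
    apply Filter.inter_mem
    · apply Filter.biInter_mem (S₀.powersetCard a).finite_toSet |>.mpr
      intro T hT
      rw [Finset.mem_coe, Finset.mem_powersetCard] at hT
      have hfv : f T = v := hv T (fun y hy => hS₀X (hT.1 hy)) hT.2
      have hT2 := hf T
      rw [hfv] at hT2
      exact hT2
    · apply Filter.mem_hyperfilter_of_finite_compl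
      apply Set.Finite.subset (Set.finite_Iio (S₀.sup id + 1))
      intro N hN
      simp only [Set.mem_compl_iff, Set.mem_setOf_eq, not_forall] at hN
      obtain ⟨m, hmS, hm⟩ := hN
      have : m ≤ S₀.sup id := Finset.le_sup (f := id) hmS
      simp only [Set.mem_Iio]
      omega
  obtain ⟨N, hN1, hN2⟩ := Filter.nonempty_of_mem hbig
  obtain ⟨T, hTS, hTcard, hTne⟩ := hF N S₀
    (fun m hm => Finset.mem_range.mpr (hN2 m hm)) hS₀card v
  apply hTne
  have : T ∈ S₀.powersetCard a := Finset.mem_powersetCard.mpr ⟨hTS, hTcard⟩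
  exact Set.mem_iInter₂.mp hN1 T this
end

section
/- Suppose an interval I ⊆ [0,1] is partitioned into three consecutive subintervals I₁, I₂, I₃ with p(I₁) = p(I₃) = ε/(2k), p(I₂) = 0, q(I₁) = q(I₃) = 0, q(I₂) = ε/k. Then for any n ∈ {0, 1, 2}: conditioned on exactly n samples landing in I, where each sample is drawn from p or q independently with equal probability 1/2 (with location conditional on the chosen distribution restricted to I), the joint distribution of (which source each sample came from, the relative order of the samples) is identical to the case where p and q are both replaced by the common distribution (p+q)/2 on I. -/
open MeasureTheory Set

namespace Stmt13Aux

lemma primitive_mono {f : ℝ → ℝ} {u : ℝ} (h0 : ∀ x, 0 ≤ f x) (hi : Integrable f) :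
    Monotone fun y => ∫ x in Ioc u y, f x := by
  intro y z hyz
  exact setIntegral_mono_set hi.integrableOn
    (Filter.Eventually.of_forall fun x => h0 x)
    ((Ioc_subset_Ioc_right hyz).eventuallyLE)

lemma split2 {f : ℝ → ℝ} {a w b : ℝ} (haw : a ≤ w) (hwb : w ≤ b)
    (h1 : IntegrableOn f (Ioc a w)) (h2 : IntegrableOn f (Ioc w b)) :
    ∫ x in Ioc a b, f x = (∫ x in Ioc a w, f x) + (∫ x in Ioc w b, f x) := by
  rw [← Ioc_union_Ioc_eq_Ioc haw hwb]
  exact setIntegral_union (Ioc_disjoint_Ioc_of_le le_rfl) measurableSet_Ioc h1 h2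

lemma split3 {f : ℝ → ℝ} {u c d v : ℝ} (huc : u ≤ c) (hcd : c ≤ d) (hdv : d ≤ v)
    (hi : IntegrableOn f (Ioc u v)) :
    ∫ x in Ioc u v, f x
      = (∫ x in Ioc u c, f x) + (∫ x in Ioc c d, f x) + (∫ x in Ioc d v, f x) := by
  have h1 : IntegrableOn f (Ioc u c) := hi.mono_set (Ioc_subset_Ioc_right (hcd.trans hdv))
  have h2 : IntegrableOn f (Ioc c d) := hi.mono_set (Ioc_subset_Ioc huc hdv)
  have h3 : IntegrableOn f (Ioc d v) := hi.mono_set (Ioc_subset_Ioc (huc.trans hcd) le_rfl)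
  rw [split2 (huc.trans hcd) hdv (hi.mono_set (Ioc_subset_Ioc_right hdv)) h3,
    split2 huc hcd h1 h2]

/-- Self-convolution identity: for a nonnegative integrable `f` supported in `Ioc a b`,
`∫ y in Ioc a b, (∫ x in Ioc a y, f) * f y = (∫ f over Ioc a b)^2 / 2`. -/
lemma self_key {f : ℝ → ℝ} {a b : ℝ} (h0 : ∀ x, 0 ≤ f x) (hm : Measurable f)
    (hi : Integrable f) (hsupp : ∀ x, x ∉ Ioc a b → f x = 0) :
    ∫ y in Ioc a b, (∫ x in Ioc a y, f x) * f y
      = (∫ x in Ioc a b, f x) ^ 2 / 2 := by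
  set F : ℝ → ℝ := fun y => ∫ x in Ioc a y, f x with hF
  set M : ℝ := ∫ x in Ioc a b, f x with hM
  have hint_eq : ∫ x, f x = M :=
    (setIntegral_eq_integral_of_forall_compl_eq_zero hsupp).symm
  have hFmono : Monotone F := primitive_mono h0 hi
  have hFmeas : Measurable F := hFmono.measurable
  have hF0 : ∀ y, 0 ≤ F y := fun y => setIntegral_nonneg measurableSet_Ioc fun x _ => h0 x
  have hFle : ∀ y, F y ≤ M := fun y =>
    le_of_le_of_eq (setIntegral_le_integral hi (Filter.Eventually.of_forall h0)) hint_eq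
  -- Fubini swap on the kernel
  have hg_meas : Measurable (fun z : ℝ × ℝ => if z.2 ≤ z.1 then f z.2 * f z.1 else 0) :=
    Measurable.ite (measurableSet_le measurable_snd measurable_fst)
      ((hm.comp measurable_snd).mul (hm.comp measurable_fst)) measurable_const
  have hdom : Integrable (fun z : ℝ × ℝ => f z.1 * f z.2) ((volume : Measure ℝ).prod volume) :=
    hi.mul_prod hi
  have hgi : Integrable (Function.uncurry fun y x => if x ≤ y then f x * f y else 0)
      ((volume : Measure ℝ).prod volume) := by
    refine hdom.mono' hg_meas.aestronglyMeasurable ?_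
    refine Filter.Eventually.of_forall fun z => ?_
    by_cases h : z.2 ≤ z.1
    · simp only [Function.uncurry, h, if_true, Real.norm_eq_abs,
        abs_of_nonneg (mul_nonneg (h0 _) (h0 _))]
      exact le_of_eq (mul_comm _ _)
    · simp only [Function.uncurry, h, if_false, norm_zero]
      exact mul_nonneg (h0 _) (h0 _)
  have hswap : (∫ y, ∫ x, (if x ≤ y then f x * f y else 0))
      = ∫ x, ∫ y, (if x ≤ y then f x * f y else 0) :=
    integral_integral_swap (f := fun y x => if x ≤ y then f x * f y else 0) hgi
  -- compute `∫ x in Iic y, f = F y` for `y ∈ Ioc a b`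
  have hIic : ∀ y ∈ Ioc a b, ∫ x in Iic y, f x = F y := by
    intro y hy
    have hsplit : Iic a ∪ Ioc a y = Iic y := Iic_union_Ioc_eq_Iic (le_of_lt hy.1)
    rw [← hsplit, setIntegral_union (Iic_disjoint_Ioc le_rfl) measurableSet_Ioc
        hi.integrableOn hi.integrableOn]
    have hz : ∫ x in Iic a, f x = 0 := by
      rw [setIntegral_congr_fun measurableSet_Iic
        (fun x hx => hsupp x (fun hmem => absurd hmem.1 (not_lt.mpr hx)))]
      simp
    rw [hz, zero_add]
  -- LHS of the swap
  have hLHS : (∫ y, ∫ x, (if x ≤ y then f x * f y else 0))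
      = ∫ y in Ioc a b, F y * f y := by
    have h1 : ∀ y : ℝ, (∫ x, (if x ≤ y then f x * f y else 0))
        = (∫ x in Iic y, f x) * f y := by
      intro y
      have hrepr : (fun x => if x ≤ y then f x * f y else 0)
          = (Iic y).indicator (fun x => f x * f y) := by
        funext x
        by_cases h : x ≤ y <;> simp [Set.indicator_apply, Set.mem_Iic, h]
      rw [hrepr, integral_indicator measurableSet_Iic, integral_mul_const]
    simp only [h1]
    rw [← setIntegral_eq_integral_of_forall_compl_eq_zero
        (s := Ioc a b) (fun y hy => by rw [hsupp y hy, mul_zero])]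
    exact setIntegral_congr_fun measurableSet_Ioc fun y hy => by rw [hIic y hy]
  -- RHS of the swap
  have hRHS : (∫ x, ∫ y, (if x ≤ y then f x * f y else 0))
      = ∫ x in Ioc a b, f x * (M - F x) := by
    have h1 : ∀ x : ℝ, (∫ y, (if x ≤ y then f x * f y else 0))
        = f x * ∫ y in Ici x, f y := by
      intro x
      have hrepr : (fun y => if x ≤ y then f x * f y else 0)
          = (Ici x).indicator (fun y => f x * f y) := by
        funext y
        by_cases h : x ≤ y <;> simp [Set.indicator_apply, Set.mem_Ici, h]
      rw [hrepr, integral_indicator measurableSet_Ici, integral_const_mul]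
    simp only [h1]
    rw [← setIntegral_eq_integral_of_forall_compl_eq_zero
        (s := Ioc a b) (fun x hx => by rw [hsupp x hx, zero_mul])]
    refine setIntegral_congr_fun measurableSet_Ioc fun x hx => ?_
    have hcompl : (∫ y in Iio x, f y) + (∫ y in Ici x, f y) = M := by
      have h := integral_add_compl (measurableSet_Iio (a := x)) hi
      rwa [compl_Iio, hint_eq] at h
    have hIio : ∫ y in Iio x, f y = F x := by
      rw [← integral_Iic_eq_integral_Iio]
      exact hIic x hx
    have hIci : ∫ y in Ici x, f y = M - F x := by linarith
    rw [hIci]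
  -- integrability on `Ioc a b`
  have hFf : IntegrableOn (fun y => F y * f y) (Ioc a b) :=
    Integrable.bdd_mul hi.integrableOn hFmeas.aestronglyMeasurable
      (c := M) (Filter.Eventually.of_forall fun y => by rw [Real.norm_eq_abs, abs_of_nonneg (hF0 y)]; exact hFle y)
  have hexp : ∫ x in Ioc a b, f x * (M - F x)
      = M * M - ∫ x in Ioc a b, F x * f x := by
    have hpt : ∀ x, f x * (M - F x) = f x * M - F x * f x := fun x => by ring
    simp only [hpt]
    rw [integral_sub (hi.integrableOn.mul_const M) hFf, integral_mul_const, ← hM]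
  have hS : ∫ y in Ioc a b, F y * f y
      = M * M - ∫ y in Ioc a b, F y * f y := by
    calc ∫ y in Ioc a b, F y * f y
        = ∫ y, ∫ x, (if x ≤ y then f x * f y else 0) := hLHS.symm
      _ = ∫ x, ∫ y, (if x ≤ y then f x * f y else 0) := hswap
      _ = ∫ x in Ioc a b, f x * (M - F x) := hRHS
      _ = M * M - ∫ x in Ioc a b, F x * f x := hexp
  have hval : ∫ y in Ioc a b, F y * f y = M * M / 2 := by linarith
  rw [hval]; ring

lemma subint_zero {f : ℝ → ℝ} {c d : ℝ} (h0 : ∀ x, 0 ≤ f x) (hi : Integrable f)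
    (hz : ∫ x in Ioc c d, f x = 0) {y : ℝ} (hy : y ≤ d) :
    ∫ x in Ioc c y, f x = 0 := by
  refine le_antisymm ?_ (setIntegral_nonneg measurableSet_Ioc fun x _ => h0 x)
  calc ∫ x in Ioc c y, f x
      ≤ ∫ x in Ioc c d, f x := setIntegral_mono_set hi.integrableOn
        (Filter.Eventually.of_forall fun x => h0 x)
        ((Ioc_subset_Ioc_right hy).eventuallyLE)
    _ = 0 := hz

lemma ae_zero {f : ℝ → ℝ} {s : Set ℝ} (h0 : ∀ x, 0 ≤ f x) (hi : Integrable f)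
    (hz : ∫ x in s, f x = 0) : f =ᵐ[volume.restrict s] 0 :=
  (integral_eq_zero_iff_of_nonneg_ae (Filter.Eventually.of_forall h0)
    hi.integrableOn).mp hz

lemma zero_piece {f g : ℝ → ℝ} {u : ℝ} {s : Set ℝ}
    (hg0 : ∀ x, 0 ≤ g x) (hgi : Integrable g) (hz : ∫ x in s, g x = 0) :
    ∫ y in s, (∫ x in Ioc u y, f x) * g y = 0 := by
  have hae : (fun y => (∫ x in Ioc u y, f x) * g y) =ᵐ[volume.restrict s] 0 := by
    filter_upwards [ae_zero hg0 hgi hz] with y hy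
    simp [hy]
  rw [integral_congr_ae hae]
  simp

lemma prim_mul_intble {f g : ℝ → ℝ} {u : ℝ} {s : Set ℝ}
    (hf0 : ∀ x, 0 ≤ f x) (hfm : Measurable f) (hfi : Integrable f)
    (hgi : Integrable g) :
    IntegrableOn (fun y => (∫ x in Ioc u y, f x) * g y) s := by
  refine Integrable.bdd_mul hgi.integrableOn
    ((primitive_mono hf0 hfi).measurable).aestronglyMeasurable
    (c := ∫ x, f x) (Filter.Eventually.of_forall fun y => ?_)
  rw [Real.norm_eq_abs,
    abs_of_nonneg (setIntegral_nonneg measurableSet_Ioc fun x _ => hf0 x)]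
  exact setIntegral_le_integral hfi (Filter.Eventually.of_forall hf0)

/-- Cross term, `f` with masses `(A, 0, ·)`, `g` with masses `(0, B, 0)`. -/
lemma cross1 {f g : ℝ → ℝ} {u c d v A B : ℝ}
    (huc : u ≤ c) (hcd : c ≤ d) (hdv : d ≤ v)
    (hf0 : ∀ x, 0 ≤ f x) (hg0 : ∀ x, 0 ≤ g x)
    (hfm : Measurable f) (hfi : Integrable f) (hgi : Integrable g)
    (hf1 : ∫ x in Ioc u c, f x = A) (hf2 : ∫ x in Ioc c d, f x = 0)
    (hg1 : ∫ x in Ioc u c, g x = 0) (hg2 : ∫ x in Ioc c d, g x = B)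
    (hg3 : ∫ x in Ioc d v, g x = 0) :
    ∫ y in Ioc u v, (∫ x in Ioc u y, f x) * g y = A * B := by
  rw [split3 huc hcd hdv (prim_mul_intble hf0 hfm hfi hgi)]
  rw [zero_piece hg0 hgi hg1, zero_piece hg0 hgi hg3, zero_add, add_zero]
  have hmid : ∫ y in Ioc c d, (∫ x in Ioc u y, f x) * g y
      = ∫ y in Ioc c d, A * g y := by
    refine setIntegral_congr_fun measurableSet_Ioc fun y hy => ?_
    rw [split2 huc (le_of_lt hy.1) hfi.integrableOn hfi.integrableOn,
      hf1, subint_zero hf0 hfi hf2 hy.2, add_zero]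
  rw [hmid, integral_const_mul, hg2]

/-- Cross term, `f` with masses `(0, B, 0)`, `g` with masses `(·, 0, C)`. -/
lemma cross2 {f g : ℝ → ℝ} {u c d v B C : ℝ}
    (huc : u ≤ c) (hcd : c ≤ d) (hdv : d ≤ v)
    (hf0 : ∀ x, 0 ≤ f x) (hg0 : ∀ x, 0 ≤ g x)
    (hfm : Measurable f) (hfi : Integrable f) (hgi : Integrable g)
    (hf1 : ∫ x in Ioc u c, f x = 0) (hf2 : ∫ x in Ioc c d, f x = B)
    (hf3 : ∫ x in Ioc d v, f x = 0)
    (hg2 : ∫ x in Ioc c d, g x = 0) (hg3 : ∫ x in Ioc d v, g x = C) :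
    ∫ y in Ioc u v, (∫ x in Ioc u y, f x) * g y = B * C := by
  rw [split3 huc hcd hdv (prim_mul_intble hf0 hfm hfi hgi)]
  have h1 : ∫ y in Ioc u c, (∫ x in Ioc u y, f x) * g y = 0 := by
    have heq : EqOn (fun y => (∫ x in Ioc u y, f x) * g y) (fun _ => (0:ℝ)) (Ioc u c) := by
      intro y hy
      simp only
      rw [subint_zero hf0 hfi hf1 hy.2, zero_mul]
    rw [setIntegral_congr_fun measurableSet_Ioc heq]
    simp
  have h3 : ∫ y in Ioc d v, (∫ x in Ioc u y, f x) * g y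
      = ∫ y in Ioc d v, B * g y := by
    refine setIntegral_congr_fun measurableSet_Ioc fun y hy => ?_
    rw [split3 huc hcd (le_of_lt hy.1) hfi.integrableOn,
      hf1, hf2, subint_zero hf0 hfi hf3 hy.2, zero_add, add_zero]
  rw [h1, zero_piece hg0 hgi hg2, h3, integral_const_mul, hg3, zero_add, zero_add]

end Stmt13Aux

open Stmt13Aux in
/-- Observation 4.3, mini-bucket indistinguishability: with the
mini-bucket structure I = I₁ ∪ I₂ ∪ I₃ ⊆ [0,1] where p(I₁) = p(I₃) = ε/(2k), p(I₂) = 0,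
q(I₁) = q(I₃) = 0, q(I₂) = ε/k, the joint distribution of source labels and relative order
of at most two samples in I (each sample's source chosen uniformly from {p, q}, with
location drawn from the chosen conditional density on I) equals that of the case p = q,
i.e. both replaced by the mixture (p+q)/2.  The nontrivial case n = 2 is expressed by the
order statistics: for any pair of labels g₁, g₂ ∈ {p, q}, the probability that the
g₁-sample precedes the g₂-sample (under the normalized conditional densities (k/ε)·gᵢ)
equals the corresponding probability for the normalized mixture.  (The cases n = 0, 1 are
trivially label-symmetric.) -/
theorem stmt13 (p q : ℝ → ℝ) (ε k : ℝ) (hε : 0 < ε) (hk : 0 < k)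
    (u c d v : ℝ) (huc : u ≤ c) (hcd : c ≤ d) (hdv : d ≤ v)
    (hu : 0 ≤ u) (hv : v ≤ 1)
    (hp0 : ∀ x, 0 ≤ p x) (hq0 : ∀ x, 0 ≤ q x)
    (hpm : Measurable p) (hqm : Measurable q)
    (hpint : IntegrableOn p (Set.Ioc u v)) (hqint : IntegrableOn q (Set.Ioc u v))
    (hp1 : ∫ x in Set.Ioc u c, p x = ε / (2 * k))
    (hp2 : ∫ x in Set.Ioc c d, p x = 0)
    (hp3 : ∫ x in Set.Ioc d v, p x = ε / (2 * k))
    (hq1 : ∫ x in Set.Ioc u c, q x = 0)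
    (hq2 : ∫ x in Set.Ioc c d, q x = ε / k)
    (hq3 : ∫ x in Set.Ioc d v, q x = 0) :
    ∀ g₁ ∈ ({p, q} : Set (ℝ → ℝ)), ∀ g₂ ∈ ({p, q} : Set (ℝ → ℝ)),
      (∫ y in Set.Ioc u v, (∫ x in Set.Ioc u y, (k / ε) * g₁ x) * ((k / ε) * g₂ y))
        = ∫ y in Set.Ioc u v,
            (∫ x in Set.Ioc u y, (k / ε) * ((p x + q x) / 2))
              * ((k / ε) * ((p y + q y) / 2)) := by
  intro g₁ hg₁ g₂ hg₂
  have hkne : k ≠ 0 := ne_of_gt hk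
  have hεne : ε ≠ 0 := ne_of_gt hε
  -- indicator versions
  set P : ℝ → ℝ := (Set.Ioc u v).indicator p with hPdef
  set Q : ℝ → ℝ := (Set.Ioc u v).indicator q with hQdef
  have hP0 : ∀ x, 0 ≤ P x := fun x => Set.indicator_nonneg (fun y _ => hp0 y) x
  have hQ0 : ∀ x, 0 ≤ Q x := fun x => Set.indicator_nonneg (fun y _ => hq0 y) x
  have hPm : Measurable P := hpm.indicator measurableSet_Ioc
  have hQm : Measurable Q := hqm.indicator measurableSet_Ioc
  have hPi : Integrable P := (integrable_indicator_iff measurableSet_Ioc).mpr hpint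
  have hQi : Integrable Q := (integrable_indicator_iff measurableSet_Ioc).mpr hqint
  have hPsupp : ∀ x, x ∉ Set.Ioc u v → P x = 0 := fun x hx => Set.indicator_of_notMem hx p
  have hQsupp : ∀ x, x ∉ Set.Ioc u v → Q x = 0 := fun x hx => Set.indicator_of_notMem hx q
  -- transfer of subinterval integrals
  have hpiece : ∀ (f : ℝ → ℝ) (s : Set ℝ), s ⊆ Set.Ioc u v →
      ∫ x in s, (Set.Ioc u v).indicator f x = ∫ x in s, f x := by
    intro f s hsub
    rw [setIntegral_indicator measurableSet_Ioc, Set.inter_eq_left.mpr hsub]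
  have hsub1 : Set.Ioc u c ⊆ Set.Ioc u v := Set.Ioc_subset_Ioc_right (hcd.trans hdv)
  have hsub2 : Set.Ioc c d ⊆ Set.Ioc u v := Set.Ioc_subset_Ioc huc hdv
  have hsub3 : Set.Ioc d v ⊆ Set.Ioc (u:ℝ) v := Set.Ioc_subset_Ioc (huc.trans hcd) le_rfl
  have hP1 : ∫ x in Set.Ioc u c, P x = ε / (2*k) := by rw [hPdef, hpiece p _ hsub1, hp1]
  have hP2 : ∫ x in Set.Ioc c d, P x = 0 := by rw [hPdef, hpiece p _ hsub2, hp2]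
  have hP3 : ∫ x in Set.Ioc d v, P x = ε / (2*k) := by rw [hPdef, hpiece p _ hsub3, hp3]
  have hQ1 : ∫ x in Set.Ioc u c, Q x = 0 := by rw [hQdef, hpiece q _ hsub1, hq1]
  have hQ2 : ∫ x in Set.Ioc c d, Q x = ε / k := by rw [hQdef, hpiece q _ hsub2, hq2]
  have hQ3 : ∫ x in Set.Ioc d v, Q x = 0 := by rw [hQdef, hpiece q _ hsub3, hq3]
  -- total masses
  have hMP : ∫ x in Set.Ioc u v, P x = ε / k := by
    rw [split3 huc hcd hdv hPi.integrableOn, hP1, hP2, hP3]; field_simp; ring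
  have hMQ : ∫ x in Set.Ioc u v, Q x = ε / k := by
    rw [split3 huc hcd hdv hQi.integrableOn, hQ1, hQ2, hQ3]; ring
  -- mixture
  have hR0 : ∀ x, 0 ≤ (P x + Q x) / 2 := fun x =>
    div_nonneg (add_nonneg (hP0 x) (hQ0 x)) (by norm_num)
  have hRm : Measurable fun x => (P x + Q x) / 2 := (hPm.add hQm).div_const 2
  have hRi : Integrable fun x => (P x + Q x) / 2 := (hPi.add hQi).div_const 2
  have hRsupp : ∀ x, x ∉ Set.Ioc u v → (P x + Q x) / 2 = 0 := fun x hx => by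
    rw [hPsupp x hx, hQsupp x hx]; ring
  have hMR : ∫ x in Set.Ioc u v, (P x + Q x) / 2 = ε / k := by
    rw [integral_div, integral_add hPi.integrableOn hQi.integrableOn, hMP, hMQ]; ring
  -- the four label S-values and the mixture S-value
  have SPP : ∫ y in Set.Ioc u v, (∫ x in Set.Ioc u y, P x) * P y = (ε/k)^2 / 2 := by
    rw [self_key hP0 hPm hPi hPsupp, hMP]
  have SQQ : ∫ y in Set.Ioc u v, (∫ x in Set.Ioc u y, Q x) * Q y = (ε/k)^2 / 2 := by
    rw [self_key hQ0 hQm hQi hQsupp, hMQ]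
  have SPQ : ∫ y in Set.Ioc u v, (∫ x in Set.Ioc u y, P x) * Q y = (ε/k)^2 / 2 := by
    rw [cross1 huc hcd hdv hP0 hQ0 hPm hPi hQi hP1 hP2 hQ1 hQ2 hQ3]
    field_simp
  have SQP : ∫ y in Set.Ioc u v, (∫ x in Set.Ioc u y, Q x) * P y = (ε/k)^2 / 2 := by
    rw [cross2 huc hcd hdv hQ0 hP0 hQm hQi hPi hQ1 hQ2 hQ3 hP2 hP3]
    field_simp
  have SMIX : ∫ y in Set.Ioc u v, (∫ x in Set.Ioc u y, (P x + Q x) / 2) * ((P y + Q y) / 2)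
      = (ε/k)^2 / 2 := by
    have h := self_key hR0 hRm hRi hRsupp
    have h2 : (∫ x in Set.Ioc u v, (P x + Q x) / 2) ^ 2 / 2 = (ε/k)^2 / 2 := by rw [hMR]
    exact h.trans h2
  -- indicator form of the mixture
  have hmixind : (Set.Ioc u v).indicator (fun x => (p x + q x) / 2)
      = fun x => (P x + Q x) / 2 := by
    rw [hPdef, hQdef]
    funext x
    by_cases hx : x ∈ Set.Ioc u v <;>
      simp [Set.indicator_of_mem, Set.indicator_of_notMem, hx]
  have SMIX' : ∫ y in Set.Ioc u v,
      (∫ x in Set.Ioc u y, (Set.Ioc u v).indicator (fun x => (p x + q x) / 2) x)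
        * ((Set.Ioc u v).indicator (fun x => (p x + q x) / 2) y) = (ε/k)^2 / 2 := by
    rw [hmixind]; exact SMIX
  -- scaling reduction
  have main : ∀ f h : ℝ → ℝ,
      (∫ y in Set.Ioc u v, (∫ x in Set.Ioc u y, (Set.Ioc u v).indicator f x)
          * ((Set.Ioc u v).indicator h y)) = (ε/k)^2 / 2 →
      (∫ y in Set.Ioc u v, (∫ x in Set.Ioc u y, (k / ε) * f x) * ((k / ε) * h y))
        = 1 / 2 := by
    intro f h hS
    have hstep : EqOn
        (fun y => (∫ x in Set.Ioc u y, (k / ε) * f x) * ((k / ε) * h y))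
        (fun y => (k/ε)^2 * ((∫ x in Set.Ioc u y, (Set.Ioc u v).indicator f x)
          * ((Set.Ioc u v).indicator h y))) (Set.Ioc u v) := by
      intro y hy
      simp only
      rw [integral_const_mul, hpiece f _ (Set.Ioc_subset_Ioc_right hy.2),
        Set.indicator_of_mem hy]
      ring
    rw [setIntegral_congr_fun measurableSet_Ioc hstep, integral_const_mul, hS]
    field_simp
    all_goals ring
  -- put everything together
  have hRHS : (∫ y in Set.Ioc u v,
      (∫ x in Set.Ioc u y, (k / ε) * ((p x + q x) / 2))
        * ((k / ε) * ((p y + q y) / 2))) = 1 / 2 :=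
    main (fun x => (p x + q x) / 2) (fun x => (p x + q x) / 2) SMIX'
  have C1 : (∫ y in Set.Ioc u v, (∫ x in Set.Ioc u y, (k / ε) * p x) * ((k / ε) * p y))
      = 1 / 2 := main p p (by rw [← hPdef]; exact SPP)
  have C2 : (∫ y in Set.Ioc u v, (∫ x in Set.Ioc u y, (k / ε) * p x) * ((k / ε) * q y))
      = 1 / 2 := main p q (by rw [← hPdef, ← hQdef]; exact SPQ)
  have C3 : (∫ y in Set.Ioc u v, (∫ x in Set.Ioc u y, (k / ε) * q x) * ((k / ε) * p y))
      = 1 / 2 := main q p (by rw [← hPdef, ← hQdef]; exact SQP)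
  have C4 : (∫ y in Set.Ioc u v, (∫ x in Set.Ioc u y, (k / ε) * q x) * ((k / ε) * q y))
      = 1 / 2 := main q q (by rw [← hQdef]; exact SQQ)
  simp only [Set.mem_insert_iff, Set.mem_singleton_iff] at hg₁ hg₂
  rcases hg₁ with rfl | rfl <;> rcases hg₂ with rfl | rfl
  · exact C1.trans hRHS.symm
  · exact C2.trans hRHS.symm
  · exact C3.trans hRHS.symm
  · exact C4.trans hRHS.symm
end

section
/- Let r be a fixed binary string of length t ≤ ℓ. Then Σ over all binary strings s of length ℓ of (N_{r,s} - (ℓ+1-t)/2^t)² ≤ 2^ℓ · t · ℓ · 2^{-t}, and consequently Σ_{|r|=t} Σ_{|s|=ℓ} (N_{r,s} - (ℓ+1-t)/2^t)² ≤ 2^ℓ · t · ℓ. -/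
/-- Extend a finite binary string (indexed by `Fin n`) to `ℕ → Bool` (false off-range). -/
def extStr (n : ℕ) (s : Fin n → Bool) : ℕ → Bool :=
  fun j => if h : j < n then s ⟨j, h⟩ else false

/-- Number of contiguous occurrences of the length-t string r in the length-ℓ string s. -/
def occCount (t ℓ : ℕ) (r s : ℕ → Bool) : ℕ :=
  ((Finset.range (ℓ + 1 - t)).filter (fun i => ∀ j ∈ Finset.range t, s (i + j) = r j)).card

namespace Stmt15Aux

lemma card_fix (ℓ : ℕ) (P : Finset (Fin ℓ)) (v : Fin ℓ → Bool) :
    (Finset.univ.filter (fun s : Fin ℓ → Bool => ∀ x ∈ P, s x = v x)).card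
      = 2 ^ (ℓ - P.card) := by
  rw [← Fintype.card_subtype]
  have e : {s : Fin ℓ → Bool // ∀ x ∈ P, s x = v x} ≃ ({x : Fin ℓ // x ∉ P} → Bool) :=
    { toFun := fun s x => s.1 x.1
      invFun := fun g => ⟨fun x => if h : x ∈ P then v x else g ⟨x, h⟩,
        fun x hx => dif_pos hx⟩
      left_inv := fun s => Subtype.ext (funext fun x => by
        by_cases h : x ∈ P
        · simp [h, s.2 x h]
        · simp [h])
      right_inv := fun g => funext fun x => by simp [x.2] }
  rw [Fintype.card_congr e, Fintype.card_fun, Fintype.card_bool]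
  congr 1
  rw [Fintype.card_subtype_compl, Fintype.card_coe, Fintype.card_fin]

/-- matching predicate: r occurs in s at position i -/
def Mat (t ℓ : ℕ) (r : Fin t → Bool) (i : ℕ) (s : Fin ℓ → Bool) : Prop :=
  ∀ j ∈ Finset.range t, (fun j => if h : j < ℓ then s ⟨j, h⟩ else false) (i + j)
    = (fun j => if h : j < t then r ⟨j, h⟩ else false) j

instance {t ℓ : ℕ} {r : Fin t → Bool} {i : ℕ} : DecidablePred (Mat t ℓ r i) := fun _ => by
  unfold Mat; infer_instance

section
variable {t ℓ : ℕ} (r : Fin t → Bool)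

lemma occ_eq (r : Fin t → Bool) (s : Fin ℓ → Bool) :
    occCount t ℓ (extStr t r) (extStr ℓ s)
      = ((Finset.range (ℓ + 1 - t)).filter (fun i => Mat t ℓ r i s)).card := by
  unfold occCount Mat extStr
  congr 1

lemma mat_point {i : ℕ} {s : Fin ℓ → Bool} (hm : Mat t ℓ r i s) (x : Fin ℓ)
    (h1 : i ≤ x.1) (h2 : x.1 < i + t) :
    s x = (if h : x.1 - i < t then r ⟨x.1 - i, h⟩ else false) := by
  have h3 : i + (x.1 - i) = x.1 := by omega
  have := hm (x.1 - i) (Finset.mem_range.mpr (by omega))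
  simp only [h3] at this
  rw [dif_pos x.2] at this
  simpa using this

lemma mat_of_point {i : ℕ} {s : Fin ℓ → Bool} (hit : i + t ≤ ℓ)
    (hv : ∀ x : Fin ℓ, i ≤ x.1 → x.1 < i + t →
      s x = (if h : x.1 - i < t then r ⟨x.1 - i, h⟩ else false)) :
    Mat t ℓ r i s := by
  intro j hj
  rw [Finset.mem_range] at hj
  have hx : i + j < ℓ := by omega
  have := hv ⟨i + j, hx⟩ (Nat.le_add_right i j) (by show i + j < i + t; omega)
  simp only [dif_pos hx]
  simp only [add_tsub_cancel_left] at this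
  rw [this]

lemma cntA {i : ℕ} (h : i + t ≤ ℓ) :
    (Finset.univ.filter (fun s : Fin ℓ → Bool => Mat t ℓ r i s)).card = 2 ^ (ℓ - t) := by
  have hP : ∀ m ∈ Finset.Ico i (i + t), m < ℓ := by
    intro m hm; rw [Finset.mem_Ico] at hm; omega
  set P : Finset (Fin ℓ) := (Finset.Ico i (i + t)).attachFin hP with hPdef
  set v : Fin ℓ → Bool := fun x => if h : x.1 - i < t then r ⟨x.1 - i, h⟩ else false with hv
  have he : (Finset.univ.filter (fun s : Fin ℓ → Bool => Mat t ℓ r i s))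
      = Finset.univ.filter (fun s : Fin ℓ → Bool => ∀ x ∈ P, s x = v x) := by
    apply Finset.filter_congr
    intro s _
    constructor
    · intro hm x hx
      rw [hPdef, Finset.mem_attachFin, Finset.mem_Ico] at hx
      exact mat_point r hm x hx.1 hx.2
    · intro hvv
      apply mat_of_point r h
      intro x hx1 hx2
      exact hvv x (by rw [hPdef, Finset.mem_attachFin, Finset.mem_Ico]; exact ⟨hx1, hx2⟩)
  rw [he, card_fix]
  congr 1
  rw [hPdef, Finset.card_attachFin, Nat.card_Ico]
  omega

lemma cntB {i j : ℕ} (hij : i + t ≤ j) (h : j + t ≤ ℓ) :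
    (Finset.univ.filter
        (fun s : Fin ℓ → Bool => Mat t ℓ r i s ∧ Mat t ℓ r j s)).card
      = 2 ^ (ℓ - 2 * t) := by
  have hP : ∀ m ∈ Finset.Ico i (i + t) ∪ Finset.Ico j (j + t), m < ℓ := by
    intro m hm; simp only [Finset.mem_union, Finset.mem_Ico] at hm; omega
  set P : Finset (Fin ℓ) :=
    ((Finset.Ico i (i + t)) ∪ (Finset.Ico j (j + t))).attachFin hP with hPdef
  set v : Fin ℓ → Bool := fun x =>
    if x.1 < i + t then (if h : x.1 - i < t then r ⟨x.1 - i, h⟩ else false)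
    else (if h : x.1 - j < t then r ⟨x.1 - j, h⟩ else false) with hv
  have he : (Finset.univ.filter
        (fun s : Fin ℓ → Bool => Mat t ℓ r i s ∧ Mat t ℓ r j s))
      = Finset.univ.filter (fun s : Fin ℓ → Bool => ∀ x ∈ P, s x = v x) := by
    apply Finset.filter_congr
    intro s _
    constructor
    · rintro ⟨hm1, hm2⟩ x hx
      rw [hPdef, Finset.mem_attachFin, Finset.mem_union, Finset.mem_Ico,
        Finset.mem_Ico] at hx
      rcases hx with hx | hx
      · rw [hv]; simp only [if_pos hx.2]
        exact mat_point r hm1 x hx.1 hx.2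
      · have hlt : ¬ x.1 < i + t := by omega
        rw [hv]; simp only [if_neg hlt]
        exact mat_point r hm2 x hx.1 hx.2
    · intro hvv
      constructor
      · apply mat_of_point r (by omega)
        intro x hx1 hx2
        have := hvv x (by rw [hPdef, Finset.mem_attachFin, Finset.mem_union,
          Finset.mem_Ico, Finset.mem_Ico]; left; exact ⟨hx1, hx2⟩)
        rw [hv] at this
        simpa only [if_pos hx2] using this
      · apply mat_of_point r h
        intro x hx1 hx2
        have := hvv x (by rw [hPdef, Finset.mem_attachFin, Finset.mem_union,
          Finset.mem_Ico, Finset.mem_Ico]; right; exact ⟨hx1, hx2⟩)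
        rw [hv] at this
        have hlt : ¬ x.1 < i + t := by omega
        simpa only [if_neg hlt] using this
  rw [he, card_fix]
  congr 1
  rw [hPdef, Finset.card_attachFin, Finset.card_union_of_disjoint, Nat.card_Ico,
    Nat.card_Ico]
  · omega
  · rw [Finset.disjoint_left]
    intro a ha hb
    rw [Finset.mem_Ico] at ha hb
    omega

lemma cntC {i d : ℕ} (hd : d ≤ t) (h : i + d + t ≤ ℓ) :
    (Finset.univ.filter
        (fun s : Fin ℓ → Bool => Mat t ℓ r i s ∧ Mat t ℓ r (i + d) s)).card
      ≤ 2 ^ (ℓ - (t + d)) := by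
  have hP : ∀ m ∈ Finset.Ico i (i + t + d), m < ℓ := by
    intro m hm; rw [Finset.mem_Ico] at hm; omega
  set P : Finset (Fin ℓ) := (Finset.Ico i (i + t + d)).attachFin hP with hPdef
  set v : Fin ℓ → Bool := fun x =>
    if x.1 < i + t then (if h : x.1 - i < t then r ⟨x.1 - i, h⟩ else false)
    else (if h : x.1 - (i + d) < t then r ⟨x.1 - (i + d), h⟩ else false) with hv
  have he : (Finset.univ.filter
        (fun s : Fin ℓ → Bool => Mat t ℓ r i s ∧ Mat t ℓ r (i + d) s))
      ⊆ Finset.univ.filter (fun s : Fin ℓ → Bool => ∀ x ∈ P, s x = v x) := by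
    intro s hs
    rw [Finset.mem_filter] at hs ⊢
    refine ⟨Finset.mem_univ _, ?_⟩
    obtain ⟨-, hm1, hm2⟩ := hs
    intro x hx
    rw [hPdef, Finset.mem_attachFin, Finset.mem_Ico] at hx
    by_cases hlt : x.1 < i + t
    · rw [hv]; simp only [if_pos hlt]
      exact mat_point r hm1 x hx.1 hlt
    · rw [hv]; simp only [if_neg hlt]
      exact mat_point r hm2 x (by omega) (by omega)
  calc _ ≤ (Finset.univ.filter (fun s : Fin ℓ → Bool => ∀ x ∈ P, s x = v x)).card :=
        Finset.card_le_card he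
    _ = 2 ^ (ℓ - (t + d)) := by
        rw [card_fix]
        congr 1
        rw [hPdef, Finset.card_attachFin, Nat.card_Ico]
        omega

lemma hcast {a b : ℕ} (h : b ≤ a) : ((2 ^ (a - b) : ℕ) : ℝ) = 2 ^ a / 2 ^ b := by
  push_cast
  rw [pow_sub₀ (2:ℝ) two_ne_zero h, div_eq_mul_inv]

lemma cntPair_le {i j : ℕ} (hij : i ≤ j) (hj : j + t ≤ ℓ) :
    ((Finset.univ.filter
        (fun s : Fin ℓ → Bool => Mat t ℓ r i s ∧ Mat t ℓ r j s)).card : ℝ)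
      ≤ 2 ^ ℓ / 4 ^ t
        + (if j - i < t then 2 ^ ℓ / 2 ^ t * ((1:ℝ)/2) ^ (j - i) else 0) := by
  by_cases hd : j - i < t
  · rw [if_pos hd]
    have hj' : j = i + (j - i) := by omega
    have hle : i + (j - i) + t ≤ ℓ := by omega
    have := cntC r (le_of_lt hd) hle
    rw [← hj'] at this
    have hcc : ((Finset.univ.filter
        (fun s : Fin ℓ → Bool => Mat t ℓ r i s ∧ Mat t ℓ r j s)).card : ℝ)
        ≤ ((2 ^ (ℓ - (t + (j - i))) : ℕ) : ℝ) := by exact_mod_cast this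
    have h2 : ((2 ^ (ℓ - (t + (j - i))) : ℕ) : ℝ) = 2 ^ ℓ / 2 ^ t * ((1:ℝ)/2) ^ (j - i) := by
      rw [hcast (by omega)]
      rw [pow_add, div_pow, one_pow]
      field_simp
    rw [h2] at hcc
    have : (0:ℝ) ≤ 2 ^ ℓ / 4 ^ t := by positivity
    linarith
  · rw [if_neg hd]
    have hij' : i + t ≤ j := by omega
    rw [cntB r hij' hj, hcast (by omega : 2 * t ≤ ℓ)]
    have : ((4:ℝ)) ^ t = 2 ^ (2 * t) := by
      rw [show (4:ℝ) = 2 ^ 2 by norm_num, ← pow_mul]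
    rw [this, add_zero]

lemma cntPair {i j : ℕ} (hi : i + t ≤ ℓ) (hj : j + t ≤ ℓ) :
    ((Finset.univ.filter
        (fun s : Fin ℓ → Bool => Mat t ℓ r i s ∧ Mat t ℓ r j s)).card : ℝ)
      ≤ 2 ^ ℓ / 4 ^ t
        + (if (i - j) + (j - i) < t
            then 2 ^ ℓ / 2 ^ t * ((1:ℝ)/2) ^ ((i - j) + (j - i)) else 0) := by
  rcases le_total i j with h | h
  · have e : (i - j) + (j - i) = j - i := by omega
    rw [e]
    exact cntPair_le r h hj
  · have e : (i - j) + (j - i) = i - j := by omega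
    rw [e]
    have hswap : (Finset.univ.filter
        (fun s : Fin ℓ → Bool => Mat t ℓ r i s ∧ Mat t ℓ r j s))
        = (Finset.univ.filter
        (fun s : Fin ℓ → Bool => Mat t ℓ r j s ∧ Mat t ℓ r i s)) := by
      apply Finset.filter_congr; intro s _; exact and_comm
    rw [hswap]
    exact cntPair_le r h hi

end

lemma geo_sum (t : ℕ) : ∑ d ∈ Finset.range t, ((1:ℝ)/2) ^ d = 2 - 2 * ((1:ℝ)/2) ^ t := by
  rw [geom_sum_eq (by norm_num)]
  have : ((1:ℝ)/2 - 1) = -(1/2) := by norm_num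
  rw [this]
  field_simp
  ring

lemma inner_bound (t n i : ℕ) (ht : 1 ≤ t) :
    ∑ j ∈ Finset.range n,
        (if (i - j) + (j - i) < t then ((1:ℝ)/2) ^ ((i - j) + (j - i)) else 0)
      ≤ 3 - 4 * ((1:ℝ)/2) ^ t := by
  rw [← Finset.sum_filter]
  set F := (Finset.range n).filter (fun j => (i - j) + (j - i) < t) with hF
  rw [← Finset.sum_filter_add_sum_filter_not F (fun j => j ≤ i)]
  have h1 : ∑ j ∈ F.filter (fun j => j ≤ i), ((1:ℝ)/2) ^ ((i - j) + (j - i))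
      ≤ ∑ d ∈ Finset.range t, ((1:ℝ)/2) ^ d := by
    rw [show (∑ j ∈ F.filter (fun j => j ≤ i), ((1:ℝ)/2) ^ ((i - j) + (j - i)))
        = ∑ j ∈ F.filter (fun j => j ≤ i), ((1:ℝ)/2) ^ (i - j) from
      Finset.sum_congr rfl (fun j hj => by
        simp only [Finset.mem_filter] at hj
        congr 1; omega)]
    have hinj : ∀ x ∈ F.filter (fun j => j ≤ i), ∀ y ∈ F.filter (fun j => j ≤ i),
        i - x = i - y → x = y := by
      intro x hx y hy he
      simp only [Finset.mem_filter] at hx hy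
      omega
    have himg : ∑ j ∈ F.filter (fun j => j ≤ i), ((1:ℝ)/2) ^ (i - j)
        = ∑ d ∈ (F.filter (fun j => j ≤ i)).image (fun j => i - j), ((1:ℝ)/2) ^ d :=
      (Finset.sum_image hinj).symm
    rw [himg]
    apply Finset.sum_le_sum_of_subset_of_nonneg
    · intro d hd
      simp only [Finset.mem_image, Finset.mem_filter, hF, Finset.mem_filter] at hd
      obtain ⟨j, ⟨⟨_, hnear⟩, hji⟩, rfl⟩ := hd
      rw [Finset.mem_range]; omega
    · intro d _ _; positivity
  have h2 : ∑ j ∈ F.filter (fun j => ¬ j ≤ i), ((1:ℝ)/2) ^ ((i - j) + (j - i))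
      ≤ ∑ d ∈ Finset.Ico 1 t, ((1:ℝ)/2) ^ d := by
    rw [show (∑ j ∈ F.filter (fun j => ¬ j ≤ i), ((1:ℝ)/2) ^ ((i - j) + (j - i)))
        = ∑ j ∈ F.filter (fun j => ¬ j ≤ i), ((1:ℝ)/2) ^ (j - i) from
      Finset.sum_congr rfl (fun j hj => by
        simp only [Finset.mem_filter] at hj
        congr 1; omega)]
    have hinj : ∀ x ∈ F.filter (fun j => ¬ j ≤ i), ∀ y ∈ F.filter (fun j => ¬ j ≤ i),
        x - i = y - i → x = y := by
      intro x hx y hy he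
      simp only [Finset.mem_filter] at hx hy
      omega
    have himg : ∑ j ∈ F.filter (fun j => ¬ j ≤ i), ((1:ℝ)/2) ^ (j - i)
        = ∑ d ∈ (F.filter (fun j => ¬ j ≤ i)).image (fun j => j - i), ((1:ℝ)/2) ^ d :=
      (Finset.sum_image hinj).symm
    rw [himg]
    apply Finset.sum_le_sum_of_subset_of_nonneg
    · intro d hd
      simp only [Finset.mem_image, Finset.mem_filter, hF, Finset.mem_filter] at hd
      obtain ⟨j, ⟨⟨_, hnear⟩, hji⟩, rfl⟩ := hd
      rw [Finset.mem_Ico]; omega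
    · intro d _ _; positivity
  have h3 : ∑ d ∈ Finset.Ico 1 t, ((1:ℝ)/2) ^ d ≤ 1 - 2 * ((1:ℝ)/2) ^ t := by
    have hins : Finset.range t = insert 0 (Finset.Ico 1 t) := by
      ext x; simp only [Finset.mem_range, Finset.mem_insert, Finset.mem_Ico]; omega
    have := geo_sum t
    rw [hins, Finset.sum_insert (by simp)] at this
    simp only [pow_zero] at this
    linarith
  have h4 := geo_sum t
  linarith

lemma hfinal_lem (t ℓ : ℕ) (ht : 1 ≤ t) (htl : t ≤ ℓ) :
    ((ℓ + 1 - t : ℕ) : ℝ) * (3 - 4 * ((1:ℝ)/2) ^ t) ≤ (t:ℝ) * ℓ := by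
  have hnr : ((ℓ + 1 - t : ℕ) : ℝ) = (ℓ:ℝ) + 1 - t := by
    rw [Nat.cast_sub (by omega : t ≤ ℓ + 1)]
    push_cast; ring
  rcases lt_or_ge t 3 with h3 | h3
  · interval_cases t
    · rw [hnr]; norm_num
    · rw [hnr]; push_cast; norm_num
      have : (2:ℝ) ≤ ℓ := by exact_mod_cast htl
      nlinarith
  · have hq : ((1:ℝ)/2) ^ t ≤ ((1:ℝ)/2) ^ 3 :=
      pow_le_pow_of_le_one (by norm_num) (by norm_num) h3
    have h3r : (3:ℝ) ≤ t := by exact_mod_cast h3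
    have hnl : ((ℓ + 1 - t : ℕ) : ℝ) ≤ ℓ := by
      rw [hnr]
      have : (1:ℝ) ≤ t := by exact_mod_cast ht
      linarith
    have hn0 : (0:ℝ) ≤ ((ℓ + 1 - t : ℕ) : ℝ) := Nat.cast_nonneg _
    have hq0 : (0:ℝ) ≤ ((1:ℝ)/2) ^ t := by positivity
    nlinarith [(Nat.cast_nonneg ℓ : (0:ℝ) ≤ (ℓ:ℝ))]

lemma main1 (t ℓ : ℕ) (ht : 1 ≤ t) (htl : t ≤ ℓ) (r : Fin t → Bool) :
    ∑ s : Fin ℓ → Bool,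
        ((((Finset.range (ℓ + 1 - t)).filter (fun i => Mat t ℓ r i s)).card : ℝ)
          - ((ℓ:ℝ) + 1 - t) / 2 ^ t) ^ 2
      ≤ (2:ℝ) ^ ℓ * t * ℓ / (2:ℝ) ^ t := by
  set n := ℓ + 1 - t with hn
  have hnr : (n : ℝ) = (ℓ:ℝ) + 1 - t := by
    rw [hn, Nat.cast_sub (by omega : t ≤ ℓ + 1)]
    push_cast; ring
  set μ : ℝ := ((ℓ:ℝ) + 1 - t) / 2 ^ t with hμ
  set ind : ℕ → (Fin ℓ → Bool) → ℝ := fun i s => if Mat t ℓ r i s then 1 else 0 with hind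
  have hN : ∀ s : Fin ℓ → Bool,
      (((Finset.range n).filter (fun i => Mat t ℓ r i s)).card : ℝ)
        = ∑ i ∈ Finset.range n, ind i s := by
    intro s
    rw [Finset.card_filter]
    push_cast
    rfl
  have hin : ∀ i ∈ Finset.range n, i + t ≤ ℓ := by
    intro i hi; rw [Finset.mem_range] at hi; omega
  have hsum_ind : ∀ i ∈ Finset.range n, ∑ s : Fin ℓ → Bool, ind i s = 2 ^ ℓ / 2 ^ t := by
    intro i hi
    rw [hind]
    rw [Finset.sum_boole, cntA r (hin i hi)]
    exact hcast htl
  have hpair : ∀ i ∈ Finset.range n, ∀ j ∈ Finset.range n,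
      ∑ s : Fin ℓ → Bool, ind i s * ind j s
        ≤ 2 ^ ℓ / 4 ^ t
          + (if (i - j) + (j - i) < t
              then 2 ^ ℓ / 2 ^ t * ((1:ℝ)/2) ^ ((i - j) + (j - i)) else 0) := by
    intro i hi j hj
    have hmul : ∀ s : Fin ℓ → Bool,
        ind i s * ind j s = if Mat t ℓ r i s ∧ Mat t ℓ r j s then (1:ℝ) else 0 := by
      intro s; rw [hind]
      by_cases h1 : Mat t ℓ r i s <;> by_cases h2 : Mat t ℓ r j s <;> simp [h1, h2]
    rw [Finset.sum_congr rfl fun s _ => hmul s, Finset.sum_boole]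
    exact cntPair r (hin i hi) (hin j hj)
  have hB : ∑ s : Fin ℓ → Bool, (∑ i ∈ Finset.range n, ind i s)
      = n * (2 ^ ℓ / 2 ^ t) := by
    rw [Finset.sum_comm]
    rw [Finset.sum_congr rfl hsum_ind, Finset.sum_const, Finset.card_range,
      nsmul_eq_mul]
  have hA : ∑ s : Fin ℓ → Bool, (∑ i ∈ Finset.range n, ind i s) ^ 2
      ≤ (n:ℝ) ^ 2 * (2 ^ ℓ / 4 ^ t)
        + (2 ^ ℓ / 2 ^ t) * ((n:ℝ) * (3 - 4 * ((1:ℝ)/2) ^ t)) := by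
    have e1 : ∀ s : Fin ℓ → Bool, (∑ i ∈ Finset.range n, ind i s) ^ 2
        = ∑ i ∈ Finset.range n, ∑ j ∈ Finset.range n, ind i s * ind j s := by
      intro s; rw [sq, Finset.sum_mul_sum]
    rw [Finset.sum_congr rfl fun s _ => e1 s]
    rw [Finset.sum_comm]
    have e2 : ∀ i ∈ Finset.range n,
        ∑ s : Fin ℓ → Bool, ∑ j ∈ Finset.range n, ind i s * ind j s
          = ∑ j ∈ Finset.range n, ∑ s : Fin ℓ → Bool, ind i s * ind j s := by
      intro i _; rw [Finset.sum_comm]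
    rw [Finset.sum_congr rfl e2]
    calc ∑ i ∈ Finset.range n, ∑ j ∈ Finset.range n,
            ∑ s : Fin ℓ → Bool, ind i s * ind j s
        ≤ ∑ i ∈ Finset.range n, ∑ j ∈ Finset.range n,
            ((2:ℝ) ^ ℓ / 4 ^ t
              + (if (i - j) + (j - i) < t
                  then 2 ^ ℓ / 2 ^ t * ((1:ℝ)/2) ^ ((i - j) + (j - i)) else 0)) := by
          apply Finset.sum_le_sum
          intro i hi
          apply Finset.sum_le_sum
          intro j hj
          exact hpair i hi j hj
      _ ≤ (n:ℝ) ^ 2 * (2 ^ ℓ / 4 ^ t)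
            + (2 ^ ℓ / 2 ^ t) * ((n:ℝ) * (3 - 4 * ((1:ℝ)/2) ^ t)) := by
          rw [Finset.sum_congr rfl (fun i _ => Finset.sum_add_distrib)]
          rw [Finset.sum_add_distrib]
          have c1 : ∑ _i ∈ Finset.range n, ∑ _j ∈ Finset.range n, (2:ℝ) ^ ℓ / 4 ^ t
              = (n:ℝ) ^ 2 * (2 ^ ℓ / 4 ^ t) := by
            simp [Finset.sum_const, Finset.card_range, nsmul_eq_mul]; ring
          rw [c1]
          have c2 : ∑ i ∈ Finset.range n, ∑ j ∈ Finset.range n,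
              (if (i - j) + (j - i) < t
                then (2:ℝ) ^ ℓ / 2 ^ t * ((1:ℝ)/2) ^ ((i - j) + (j - i)) else 0)
              ≤ ((2:ℝ) ^ ℓ / 2 ^ t) * ((n:ℝ) * (3 - 4 * ((1:ℝ)/2) ^ t)) := by
            have e3 : ∀ i ∈ Finset.range n, ∑ j ∈ Finset.range n,
                (if (i - j) + (j - i) < t
                  then (2:ℝ) ^ ℓ / 2 ^ t * ((1:ℝ)/2) ^ ((i - j) + (j - i)) else 0)
                = ((2:ℝ) ^ ℓ / 2 ^ t) * ∑ j ∈ Finset.range n,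
                    (if (i - j) + (j - i) < t
                      then ((1:ℝ)/2) ^ ((i - j) + (j - i)) else 0) := by
              intro i _
              rw [Finset.mul_sum]
              apply Finset.sum_congr rfl
              intro j _
              by_cases h : (i - j) + (j - i) < t <;> simp [h]
            rw [Finset.sum_congr rfl e3]
            calc ∑ i ∈ Finset.range n, ((2:ℝ) ^ ℓ / 2 ^ t) * ∑ j ∈ Finset.range n,
                    (if (i - j) + (j - i) < t
                      then ((1:ℝ)/2) ^ ((i - j) + (j - i)) else 0)
                ≤ ∑ _i ∈ Finset.range n, ((2:ℝ) ^ ℓ / 2 ^ t) * (3 - 4 * ((1:ℝ)/2) ^ t) := by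
                  apply Finset.sum_le_sum
                  intro i _
                  apply mul_le_mul_of_nonneg_left (inner_bound t n i ht)
                  positivity
              _ = ((2:ℝ) ^ ℓ / 2 ^ t) * ((n:ℝ) * (3 - 4 * ((1:ℝ)/2) ^ t)) := by
                  rw [Finset.sum_const, Finset.card_range, nsmul_eq_mul]; ring
          linarith
  have expand : ∑ s : Fin ℓ → Bool,
      ((∑ i ∈ Finset.range n, ind i s) - μ) ^ 2
      = (∑ s : Fin ℓ → Bool, (∑ i ∈ Finset.range n, ind i s) ^ 2)
        - 2 * μ * (∑ s : Fin ℓ → Bool, (∑ i ∈ Finset.range n, ind i s))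
        + 2 ^ ℓ * μ ^ 2 := by
    have e : ∀ s : Fin ℓ → Bool, ((∑ i ∈ Finset.range n, ind i s) - μ) ^ 2
        = (∑ i ∈ Finset.range n, ind i s) ^ 2
          - 2 * μ * (∑ i ∈ Finset.range n, ind i s) + μ ^ 2 := by
      intro s; ring
    rw [Finset.sum_congr rfl fun s _ => e s, Finset.sum_add_distrib,
      Finset.sum_sub_distrib, ← Finset.mul_sum, Finset.sum_const, Finset.card_univ,
      nsmul_eq_mul]
    congr 2
    rw [Fintype.card_fun, Fintype.card_bool, Fintype.card_fin]
    push_cast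
    ring
  have hfinal : (n:ℝ) * (3 - 4 * ((1:ℝ)/2) ^ t) ≤ (t:ℝ) * ℓ := by
    rw [hn]; exact hfinal_lem t ℓ ht htl
  have goal_eq : ∑ s : Fin ℓ → Bool,
      ((((Finset.range n).filter (fun i => Mat t ℓ r i s)).card : ℝ) - μ) ^ 2
      = ∑ s : Fin ℓ → Bool, ((∑ i ∈ Finset.range n, ind i s) - μ) ^ 2 := by
    apply Finset.sum_congr rfl
    intro s _
    rw [hN s]
  rw [goal_eq, expand, hB]
  have hμn : μ = (n:ℝ) / 2 ^ t := by rw [hμ, hnr]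
  have h2t : (0:ℝ) < 2 ^ t := by positivity
  have h4t : ((4:ℝ)) ^ t = 2 ^ t * 2 ^ t := by
    rw [show (4:ℝ) = 2 * 2 by norm_num, mul_pow]
  have hc2 : (0:ℝ) < 2 ^ ℓ / 2 ^ t := by positivity
  have key : (n:ℝ) ^ 2 * (2 ^ ℓ / 4 ^ t)
        + (2 ^ ℓ / 2 ^ t) * ((n:ℝ) * (3 - 4 * ((1:ℝ)/2) ^ t))
        - 2 * μ * ((n:ℝ) * (2 ^ ℓ / 2 ^ t)) + 2 ^ ℓ * μ ^ 2
      ≤ (2:ℝ) ^ ℓ * t * ℓ / (2:ℝ) ^ t := by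
    rw [hμn, h4t]
    have hcomb : (n:ℝ) ^ 2 * ((2:ℝ) ^ ℓ / (2 ^ t * 2 ^ t))
        - 2 * ((n:ℝ) / 2 ^ t) * ((n:ℝ) * ((2:ℝ) ^ ℓ / 2 ^ t))
        + (2:ℝ) ^ ℓ * ((n:ℝ) / 2 ^ t) ^ 2 = 0 := by
      field_simp
      ring
    have hmul := mul_le_mul_of_nonneg_left hfinal (le_of_lt hc2)
    have : ((2:ℝ) ^ ℓ / 2 ^ t) * ((t:ℝ) * ℓ) = (2:ℝ) ^ ℓ * t * ℓ / 2 ^ t := by ring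
    linarith
  linarith [hA]

end Stmt15Aux

/-- Σ_{|s|=ℓ} (N_{r,s} - (ℓ+1-t)/2^t)² ≤ 2^ℓ·t·ℓ·2^{-t} for each r of
length t, and summing over the 2^t patterns r, Σ_{|r|=t} Σ_{|s|=ℓ} (...)² ≤ 2^ℓ·t·ℓ. -/
theorem stmt15 (t ℓ : ℕ) (ht : 1 ≤ t) (htl : t ≤ ℓ) :
    (∀ r : Fin t → Bool,
      (∑ s : Fin ℓ → Bool,
          ((occCount t ℓ (extStr t r) (extStr ℓ s) : ℝ) - ((ℓ : ℝ) + 1 - t) / (2:ℝ) ^ t) ^ 2)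
        ≤ (2:ℝ) ^ ℓ * t * ℓ / (2:ℝ) ^ t) ∧
    (∑ r : Fin t → Bool, ∑ s : Fin ℓ → Bool,
        ((occCount t ℓ (extStr t r) (extStr ℓ s) : ℝ) - ((ℓ : ℝ) + 1 - t) / (2:ℝ) ^ t) ^ 2)
      ≤ (2:ℝ) ^ ℓ * t * ℓ := by
  have h1 : ∀ r : Fin t → Bool,
      (∑ s : Fin ℓ → Bool,
          ((occCount t ℓ (extStr t r) (extStr ℓ s) : ℝ) - ((ℓ : ℝ) + 1 - t) / (2:ℝ) ^ t) ^ 2)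
        ≤ (2:ℝ) ^ ℓ * t * ℓ / (2:ℝ) ^ t := by
    intro r
    have heq : ∑ s : Fin ℓ → Bool,
        ((occCount t ℓ (extStr t r) (extStr ℓ s) : ℝ) - ((ℓ : ℝ) + 1 - t) / (2:ℝ) ^ t) ^ 2
        = ∑ s : Fin ℓ → Bool,
          ((((Finset.range (ℓ + 1 - t)).filter
              (fun i => Stmt15Aux.Mat t ℓ r i s)).card : ℝ)
            - ((ℓ:ℝ) + 1 - t) / 2 ^ t) ^ 2 := by
      apply Finset.sum_congr rfl
      intro s _
      rw [Stmt15Aux.occ_eq]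
    rw [heq]
    exact Stmt15Aux.main1 t ℓ ht htl r
  refine ⟨h1, ?_⟩
  calc ∑ r : Fin t → Bool, ∑ s : Fin ℓ → Bool,
        ((occCount t ℓ (extStr t r) (extStr ℓ s) : ℝ) - ((ℓ : ℝ) + 1 - t) / (2:ℝ) ^ t) ^ 2
      ≤ ∑ _r : Fin t → Bool, (2:ℝ) ^ ℓ * t * ℓ / (2:ℝ) ^ t :=
        Finset.sum_le_sum (fun r _ => h1 r)
    _ = (2:ℝ) ^ t * ((2:ℝ) ^ ℓ * t * ℓ / (2:ℝ) ^ t) := by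
        rw [Finset.sum_const, Finset.card_univ, Fintype.card_fun, Fintype.card_bool,
          Fintype.card_fin, nsmul_eq_mul]
        push_cast
        ring
    _ = (2:ℝ) ^ ℓ * t * ℓ := by
        field_simp
end

section
/- Let p, q : [0,1] → ℝ≥0 be continuous densities bounded above by 2, m > 0, and let f : [0,1] → [-1,1] satisfy f' = m(p - q) - m(p+q)f. Let I ⊆ [0,1] be an interval with |p(I) - q(I)| = δ > 0 and p(I) + q(I) < 1/m. Then ∫_I f(t)²(p(t)+q(t)) dt ≥ m²δ³/729. -/
open MeasureTheory Set intervalIntegral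

/-- Lemma 3.7: for continuous densities p, q ≤ 2 on [0,1], f : [0,1] → [-1,1]
with f' = m(p-q) - m(p+q)f, and an interval I = [X,Y] with |p(I)-q(I)| = δ > 0 and
p(I)+q(I) < 1/m, one has ∫_I f²(p+q) ≥ m²δ³/729. -/
theorem stmt19 (p q f : ℝ → ℝ) (m δ : ℝ) (hm : 0 < m) (hδ : 0 < δ)
    (hpc : ContinuousOn p (Icc 0 1)) (hqc : ContinuousOn q (Icc 0 1))
    (hp0 : ∀ x, 0 ≤ p x) (hq0 : ∀ x, 0 ≤ q x)
    (hp2 : ∀ x, p x ≤ 2) (hq2 : ∀ x, q x ≤ 2)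
    (hfrange : ∀ t ∈ Icc (0:ℝ) 1, f t ∈ Icc (-1:ℝ) 1)
    (hf' : ∀ t ∈ Icc (0:ℝ) 1, HasDerivAt f (m * (p t - q t) - m * (p t + q t) * f t) t)
    (X Y : ℝ) (hXY : X ≤ Y) (hX : 0 ≤ X) (hY : Y ≤ 1)
    (hdisc : |∫ t in X..Y, (p t - q t)| = δ)
    (hmass : (∫ t in X..Y, (p t + q t)) < 1 / m) :
    m ^ 2 * δ ^ 3 / 729 ≤ ∫ t in X..Y, f t ^ 2 * (p t + q t) := by
  set s : ℝ → ℝ := fun t => p t + q t with hs_def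
  set g : ℝ → ℝ := fun t => m * (p t - q t) - m * (p t + q t) * f t with hg_def
  have hsub : Icc X Y ⊆ Icc (0:ℝ) 1 := Icc_subset_Icc hX hY
  have hs0 : ∀ t, 0 ≤ s t := fun t => add_nonneg (hp0 t) (hq0 t)
  have hsc : ContinuousOn s (Icc 0 1) := hpc.add hqc
  have hfc : ContinuousOn f (Icc 0 1) := fun t ht => ((hf' t ht).continuousAt).continuousWithinAt
  have hgc : ContinuousOn g (Icc 0 1) :=
    (continuousOn_const.mul (hpc.sub hqc)).sub ((continuousOn_const.mul (hpc.add hqc)).mul hfc)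
  have hfabs : ∀ t ∈ Icc (0:ℝ) 1, |f t| ≤ 1 := by
    intro t ht
    have := hfrange t ht
    rw [abs_le]; exact ⟨this.1, this.2⟩
  -- integrability helper
  have hint : ∀ (h : ℝ → ℝ), ContinuousOn h (Icc 0 1) → ∀ a b, X ≤ a → b ≤ Y → a ≤ b →
      IntervalIntegrable h volume a b := by
    intro h hc a b ha hb hab
    apply (hc.mono ?_).intervalIntegrable
    rw [uIcc_of_le hab]
    exact fun z hz => hsub ⟨le_trans ha hz.1, le_trans hz.2 hb⟩
  -- FTC helper
  have hftc : ∀ a b, X ≤ a → b ≤ Y → a ≤ b → (∫ t in a..b, g t) = f b - f a := by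
    intro a b ha hb hab
    apply integral_eq_sub_of_hasDerivAt
    · intro t ht
      rw [uIcc_of_le hab] at ht
      exact hf' t (hsub ⟨le_trans ha ht.1, le_trans ht.2 hb⟩)
    · exact hint g hgc a b ha hb hab
  -- bound on |g|
  have hgb : ∀ t ∈ Icc (0:ℝ) 1, |g t| ≤ 2 * m * s t := by
    intro t ht
    have h1 : |p t - q t| ≤ s t := by
      rw [abs_le]; constructor <;> [skip; skip] <;>
        · have := hp0 t; have := hq0 t; simp only [hs_def]; nlinarith
    have h2 : |f t| ≤ 1 := hfabs t ht
    have h3 : |g t| ≤ |m * (p t - q t)| + |m * (p t + q t) * f t| := abs_sub _ _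
    rw [abs_mul, abs_mul, abs_mul, abs_of_nonneg hm.le, abs_of_nonneg (hs0 t)] at h3
    calc |g t| ≤ m * |p t - q t| + m * s t * |f t| := h3
      _ ≤ m * s t + m * s t * 1 := by
          gcongr <;> first
            | exact h1 | exact h2 | exact hm.le | exact mul_nonneg hm.le (hs0 t)
      _ = 2 * m * s t := by ring
  -- difference bound via FTC
  have hdiff : ∀ a b, X ≤ a → b ≤ Y → a ≤ b → |f b - f a| ≤ 2 * m * ∫ t in a..b, s t := by
    intro a b ha hb hab
    rw [← hftc a b ha hb hab]
    calc |∫ t in a..b, g t| ≤ ∫ t in a..b, |g t| := abs_integral_le_integral_abs hab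
      _ ≤ ∫ t in a..b, 2 * m * s t := by
          apply integral_mono_on hab ((hint g hgc a b ha hb hab).abs)
            ((hint s hsc a b ha hb hab).const_mul _)
          intro t ht
          exact hgb t (hsub ⟨le_trans ha ht.1, le_trans ht.2 hb⟩)
      _ = 2 * m * ∫ t in a..b, s t := intervalIntegral.integral_const_mul _ _
  -- nonnegativity of mass on subintervals
  have hsnn : ∀ a b, X ≤ a → b ≤ Y → a ≤ b → 0 ≤ ∫ t in a..b, s t := by
    intro a b ha hb hab
    apply intervalIntegral.integral_nonneg hab
    intro u _; exact hs0 u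
  -- monotonicity of mass
  have hmono : ∀ a b c, X ≤ a → a ≤ b → b ≤ c → c ≤ Y → (∫ t in a..b, s t) ≤ ∫ t in a..c, s t := by
    intro a b c ha hab hbc hc
    have := intervalIntegral.integral_add_adjacent_intervals
      (hint s hsc a b ha (hbc.trans hc) hab) (hint s hsc b c (ha.trans hab) hc hbc)
    have h2 := hsnn b c (ha.trans hab) hc hbc
    linarith
  have hmono' : ∀ a b c, X ≤ a → a ≤ b → b ≤ c → c ≤ Y → (∫ t in b..c, s t) ≤ ∫ t in a..c, s t := by
    intro a b c ha hab hbc hc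
    have := intervalIntegral.integral_add_adjacent_intervals
      (hint s hsc a b ha (hbc.trans hc) hab) (hint s hsc b c (ha.trans hab) hc hbc)
    have h2 := hsnn a b ha (hbc.trans hc) hab
    linarith
  -- δ ≤ mass
  have hdm : δ ≤ ∫ t in X..Y, s t := by
    rw [← hdisc]
    calc |∫ t in X..Y, (p t - q t)| ≤ ∫ t in X..Y, |p t - q t| := abs_integral_le_integral_abs hXY
      _ ≤ ∫ t in X..Y, s t := by
          apply integral_mono_on hXY ((hint _ (hpc.sub hqc) X Y le_rfl le_rfl hXY).abs)
            (hint s hsc X Y le_rfl le_rfl hXY)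
          intro t ht
          have := hp0 t; have := hq0 t
          rw [abs_le]; constructor <;> · simp only [hs_def, Pi.sub_apply]; nlinarith
  -- max point
  obtain ⟨x, hxmem, hxmax⟩ := IsCompact.exists_isMaxOn (isCompact_Icc (a := X) (b := Y))
    (nonempty_Icc.mpr hXY) ((hfc.mono hsub).abs)
  have hxmax' : ∀ z ∈ Icc X Y, |f z| ≤ |f x| := hxmax
  -- step 1: |f x| ≥ m δ / 3
  have hmmass : m * ∫ t in X..Y, s t ≤ 1 := by
    rw [← le_div_iff₀' hm]; exact hmass.le
  have hstep1 : m * δ / 3 ≤ |f x| := by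
    have hftcXY := hftc X Y le_rfl le_rfl hXY
    have hA := hint (fun t => m * (p t - q t)) (continuousOn_const.mul (hpc.sub hqc) : ContinuousOn (fun t => m * (p t - q t)) _) X Y le_rfl le_rfl hXY
    have hB := hint (fun t => m * s t * f t) (((continuousOn_const.mul hsc).mul hfc) : ContinuousOn (fun t => m * s t * f t) _) X Y le_rfl le_rfl hXY
    have hsplit : (∫ t in X..Y, g t) = m * (∫ t in X..Y, (p t - q t)) - ∫ t in X..Y, m * s t * f t := by
      rw [← intervalIntegral.integral_const_mul, ← intervalIntegral.integral_sub hA hB]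
    have habs : |∫ t in X..Y, m * s t * f t| ≤ |f x| := by
      calc |∫ t in X..Y, m * s t * f t| ≤ ∫ t in X..Y, |m * s t * f t| :=
            abs_integral_le_integral_abs hXY
        _ ≤ ∫ t in X..Y, m * s t * |f x| := by
            apply integral_mono_on hXY ((hint _ ((continuousOn_const.mul hsc).mul hfc) X Y le_rfl le_rfl hXY).abs)
              (((hint s hsc X Y le_rfl le_rfl hXY).const_mul m).mul_const _)
            intro t ht
            simp only [Pi.mul_apply]
            rw [abs_mul, abs_mul, abs_of_nonneg hm.le, abs_of_nonneg (hs0 t)]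
            exact mul_le_mul_of_nonneg_left (hxmax' t ht) (mul_nonneg hm.le (hs0 t))
        _ = (m * ∫ t in X..Y, s t) * |f x| := by
            rw [← intervalIntegral.integral_const_mul, ← intervalIntegral.integral_mul_const]
        _ ≤ 1 * |f x| := mul_le_mul_of_nonneg_right hmmass (abs_nonneg _)
        _ = |f x| := one_mul _
    have hfb : |f Y - f X| ≤ 2 * |f x| := by
      calc |f Y - f X| ≤ |f Y| + |f X| := abs_sub _ _
        _ ≤ |f x| + |f x| := add_le_add (hxmax' Y ⟨hXY, le_rfl⟩) (hxmax' X ⟨le_rfl, hXY⟩)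
        _ = 2 * |f x| := by ring
    have key : m * δ ≤ 3 * |f x| := by
      have h1 : m * δ = |m * ∫ t in X..Y, (p t - q t)| := by
        rw [abs_mul, abs_of_nonneg hm.le, hdisc]
      have h2 : m * (∫ t in X..Y, (p t - q t)) = (∫ t in X..Y, g t) + ∫ t in X..Y, m * s t * f t := by
        rw [hsplit]; ring
      rw [h1, h2, hftcXY]
      calc |f Y - f X + ∫ t in X..Y, m * s t * f t| ≤ |f Y - f X| + |∫ t in X..Y, m * s t * f t| :=
            abs_add_le _ _
        _ ≤ 2 * |f x| + |f x| := add_le_add hfb habs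
        _ = 3 * |f x| := by ring
    linarith
  have hxX : X ≤ x := hxmem.1
  have hxY : x ≤ Y := hxmem.2
  -- shared final step
  have final : ∀ a b, X ≤ a → a ≤ b → b ≤ Y → (∫ t in a..b, s t) = δ / 9 →
      (∀ z ∈ Icc a b, m * δ / 9 ≤ |f z|) → m ^ 2 * δ ^ 3 / 729 ≤ ∫ t in X..Y, f t ^ 2 * s t := by
    intro a b ha hab hb hsint hlow
    have hintf2s : ∀ c d, X ≤ c → d ≤ Y → c ≤ d → IntervalIntegrable (fun t => f t ^ 2 * s t) volume c d :=
      fun c d hc hd hcd => hint _ ((hfc.pow 2).mul hsc) c d hc hd hcd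
    have h1 : m ^ 2 * δ ^ 3 / 729 ≤ ∫ t in a..b, f t ^ 2 * s t := by
      have h2 : (∫ t in a..b, (m * δ / 9) ^ 2 * s t) ≤ ∫ t in a..b, f t ^ 2 * s t := by
        apply integral_mono_on hab ((hint s hsc a b ha hb hab).const_mul _)
          (hintf2s a b ha hb hab)
        intro t ht
        apply mul_le_mul_of_nonneg_right _ (hs0 t)
        rw [← sq_abs (f t)]
        exact pow_le_pow_left₀ (by positivity) (hlow t ht) 2
      have h3 : (∫ t in a..b, (m * δ / 9) ^ 2 * s t) = m ^ 2 * δ ^ 3 / 729 := by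
        rw [intervalIntegral.integral_const_mul, hsint]; ring
      linarith
    have hnn1 : 0 ≤ ∫ t in X..a, f t ^ 2 * s t := by
      apply intervalIntegral.integral_nonneg ha
      intro u _; exact mul_nonneg (sq_nonneg _) (hs0 u)
    have hnn2 : 0 ≤ ∫ t in b..Y, f t ^ 2 * s t := by
      apply intervalIntegral.integral_nonneg hb
      intro u _; exact mul_nonneg (sq_nonneg _) (hs0 u)
    have hadd1 := intervalIntegral.integral_add_adjacent_intervals
      (hintf2s X a le_rfl (hab.trans hb) ha) (hintf2s a b ha hb hab)
    have hadd2 := intervalIntegral.integral_add_adjacent_intervals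
      (hintf2s X b le_rfl hb (ha.trans hab)) (hintf2s b Y (ha.trans hab) le_rfl hb)
    linarith
  by_cases hcase : δ / 9 ≤ ∫ t in x..Y, s t
  · -- subinterval to the right of x
    have hFc : ContinuousOn (fun z => ∫ t in x..z, s t) (Icc x Y) := by
      have := intervalIntegral.continuousOn_primitive_interval'
        (hint s hsc x Y hxX le_rfl hxY) (left_mem_uIcc (a := x) (b := Y))
      rwa [uIcc_of_le hxY] at this
    have hivt : (δ/9) ∈ (fun z => ∫ t in x..z, s t) '' Icc x Y := by
      apply intermediate_value_Icc hxY hFc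
      refine ⟨?_, hcase⟩
      rw [intervalIntegral.integral_same]
      positivity
    obtain ⟨y, hymem, hFy⟩ := hivt
    simp only at hFy
    have hlow : ∀ z ∈ Icc x y, m * δ / 9 ≤ |f z| := by
      intro z hz
      have hzY : z ≤ Y := hz.2.trans hymem.2
      have hd := hdiff x z hxX hzY hz.1
      have hle : (∫ t in x..z, s t) ≤ δ / 9 := by
        rw [← hFy]; exact hmono x z y hxX hz.1 hz.2 hymem.2
      have hle2 := mul_le_mul_of_nonneg_left hle (by positivity : (0:ℝ) ≤ 2 * m)
      have h5 : |f x| - |f z| ≤ |f x - f z| := abs_sub_abs_le_abs_sub _ _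
      rw [abs_sub_comm] at h5
      nlinarith [hstep1]
    exact final x y hxX hymem.1 hymem.2 hFy hlow
  · -- subinterval to the left of x
    push_neg at hcase
    have hsplitX := intervalIntegral.integral_add_adjacent_intervals
      (hint s hsc X x le_rfl hxY hxX) (hint s hsc x Y hxX le_rfl hxY)
    have hGx : δ / 9 ≤ ∫ t in X..x, s t := by linarith
    have hGc : ContinuousOn (fun z => ∫ t in X..z, s t) (Icc X x) := by
      have := intervalIntegral.continuousOn_primitive_interval'
        (hint s hsc X x le_rfl hxY hxX) (left_mem_uIcc (a := X) (b := x))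
      rwa [uIcc_of_le hxX] at this
    have hivt : ((∫ t in X..x, s t) - δ/9) ∈ (fun z => ∫ t in X..z, s t) '' Icc X x := by
      apply intermediate_value_Icc hxX hGc
      constructor
      · rw [intervalIntegral.integral_same]; linarith
      · show (∫ t in X..x, s t) - δ/9 ≤ ∫ t in X..x, s t
        linarith [hδ]
    obtain ⟨y, hymem, hGy⟩ := hivt
    have hyx : y ≤ x := hymem.2
    have hsplity := intervalIntegral.integral_add_adjacent_intervals
      (hint s hsc X y le_rfl (hyx.trans hxY) hymem.1) (hint s hsc y x hymem.1 hxY hyx)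
    have hFy : (∫ t in y..x, s t) = δ / 9 := by linarith
    have hlow : ∀ z ∈ Icc y x, m * δ / 9 ≤ |f z| := by
      intro z hz
      have hXz : X ≤ z := hymem.1.trans hz.1
      have hd := hdiff z x hXz hxY hz.2
      have hle : (∫ t in z..x, s t) ≤ δ / 9 := by
        rw [← hFy]; exact hmono' y z x hymem.1 hz.1 hz.2 hxY
      have hle2 := mul_le_mul_of_nonneg_left hle (by positivity : (0:ℝ) ≤ 2 * m)
      have h5 : |f x| - |f z| ≤ |f x - f z| := abs_sub_abs_le_abs_sub _ _
      nlinarith [hstep1]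
    exact final y x hymem.1 hyx hxY hFy hlow
end
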